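/- arXiv:0805.1699 — 6 statements merged into one kernel-verified Lean document; each statement's English description precedes it below -/
import Mathlib

section
/- Let φ be a real-valued, twice continuously differentiable function on [a, b] such that φ'(t) ≠ 0 for all t ∈ [a, b]. If φ(b) = φ(a) + 2kπ for some integer k and φ'(b) = φ'(a), then |∫_a^b e^{iφ(t)} dt| ≤ V, where V is the total variation of the function 1/φ' on the interval [a, b]. -/
open MeasureTheory Filter Set intervalIntegral
open scoped Real Topology

/-!
With `g = 1 / φ'` we have `(g e^{iφ})' = g' e^{iφ} + i e^{iφ}`, so integrating over `[a, b]`,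
where the boundary term vanishes by the two periodicity hypotheses, gives
`∫ e^{iφ} = i ∫ g' e^{iφ}`, hence `|∫ e^{iφ}| ≤ ∫ |g'|`. Finally `∫ |g'| ≤ Var g`: with
`p t = Var_{[a, t]} g`, both `p + g` and `p - g` are monotone, so `|g'| ≤ p'` almost everywhere,
and the integral of the derivative of the monotone function `p` is at most `p b - p a = Var g`.
-/

lemma MonotoneOn.deriv_nonneg_of_mem_nhds {f : ℝ → ℝ} {s : Set ℝ} {x : ℝ}
    (hf : MonotoneOn f s) (hs : s ∈ 𝓝 x) : 0 ≤ deriv f x :=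
  (derivWithin_of_mem_nhds (f := f) hs) ▸ hf.derivWithin_nonneg

lemma abs_deriv_le_deriv_variationOnFromTo {g : ℝ → ℝ} {s : Set ℝ} {a x : ℝ}
    (hg : LocallyBoundedVariationOn g s) (ha : a ∈ s) (hs : s ∈ 𝓝 x)
    (hp : DifferentiableAt ℝ (variationOnFromTo g s a) x) :
    |deriv g x| ≤ deriv (variationOnFromTo g s a) x := by
  by_cases hgx : DifferentiableAt ℝ g x
  · have hadd := (variationOnFromTo.add_self_monotoneOn hg ha).deriv_nonneg_of_mem_nhds hs
    have hsub := (variationOnFromTo.sub_self_monotoneOn hg ha).deriv_nonneg_of_mem_nhds hs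
    rw [deriv_add hp hgx] at hadd
    rw [deriv_sub hp hgx] at hsub
    exact abs_le.mpr ⟨by linarith, by linarith⟩
  · rw [deriv_zero_of_not_differentiableAt hgx, abs_zero]
    exact (variationOnFromTo.monotoneOn hg ha).deriv_nonneg_of_mem_nhds hs

theorem BoundedVariationOn.integral_abs_deriv_le {g : ℝ → ℝ} {a b : ℝ} (hab : a ≤ b)
    (hg : BoundedVariationOn g (Icc a b)) :
    ∫ x in a..b, |deriv g x| ≤ (eVariationOn g (Icc a b)).toReal := by
  set p := variationOnFromTo g (Icc a b) a
  have ha : a ∈ Icc a b := left_mem_Icc.mpr hab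
  have hp : MonotoneOn p (uIcc a b) :=
    uIcc_of_le hab ▸ variationOnFromTo.monotoneOn hg.locallyBoundedVariationOn ha
  have habs_le : |deriv g| ≤ᵐ[volume.restrict (Icc a b)] deriv p := by
    rw [EventuallyLE, ← restrict_Ioo_eq_restrict_Icc, ae_restrict_iff' measurableSet_Ioo]
    have hpIoo : MonotoneOn p (Ioo a b) := hp.mono (uIcc_of_le hab ▸ Ioo_subset_Icc_self)
    filter_upwards [hpIoo.ae_differentiableWithinAt_of_mem] with x hx hxI
    exact abs_deriv_le_deriv_variationOnFromTo hg.locallyBoundedVariationOn ha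
      (Icc_mem_nhds hxI.1 hxI.2) ((hx hxI).differentiableAt (Ioo_mem_nhds hxI.1 hxI.2))
  have hpab : p b - p a = (eVariationOn g (Icc a b)).toReal := by
    simp [p, variationOnFromTo.self, variationOnFromTo.eq_of_le _ _ hab]
  calc ∫ x in a..b, |deriv g x|
      ≤ ∫ x in a..b, deriv p x :=
        integral_mono_ae_restrict hab
          (uIcc_of_le hab ▸ hg).intervalIntegrable_deriv.abs hp.intervalIntegrable_deriv habs_le
    _ ≤ p b - p a := by
        have h := hp.intervalIntegral_deriv_mem_uIcc
        rw [uIcc_of_le (hpab ▸ ENNReal.toReal_nonneg)] at h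
        exact h.2
    _ = (eVariationOn g (Icc a b)).toReal := hpab

open Complex in
theorem integral_deriv_mul_cexp_add_I_mul_integral_cexp {φ φ' g : ℝ → ℝ} {a b : ℝ}
    (hab : a ≤ b)
    (hφc : ContinuousOn φ (Icc a b)) (hgc : ContinuousOn g (Icc a b))
    (hφ : ∀ t ∈ Ioo a b, HasDerivAt φ (φ' t) t) (hg : ∀ t ∈ Ioo a b, DifferentiableAt ℝ g t)
    (hgφ : ∀ t ∈ Ioo a b, g t * φ' t = 1) (hg' : IntervalIntegrable (deriv g) volume a b) :
    (∫ t in a..b, ((deriv g t : ℝ) : ℂ) * cexp (I * φ t)) + I * ∫ t in a..b, cexp (I * φ t) =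
      g b * cexp (I * φ b) - g a * cexp (I * φ a) := by
  have hec : ContinuousOn (fun t ↦ cexp (I * φ t)) (uIcc a b) :=
    uIcc_of_le hab ▸ (continuous_exp.comp_continuousOn
      (continuousOn_const.mul (continuous_ofReal.comp_continuousOn hφc)))
  have hg'e :
      IntervalIntegrable (fun t ↦ ((deriv g t : ℝ) : ℂ) * cexp (I * φ t)) volume a b :=
    IntervalIntegrable.mul_continuousOn ⟨hg'.1.ofReal, hg'.2.ofReal⟩ hec
  have hIe : IntervalIntegrable (fun t ↦ I * cexp (I * φ t)) volume a b :=
    hec.intervalIntegrable.const_mul I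
  have hderiv : ∀ t ∈ Ioo a b, HasDerivAt (fun t ↦ (g t : ℂ) * cexp (I * φ t))
      (((deriv g t : ℝ) : ℂ) * cexp (I * φ t) + I * cexp (I * φ t)) t := by
    intro t ht
    have hgφt : (g t : ℂ) * φ' t = 1 := by exact_mod_cast hgφ t ht
    refine ((hg t ht).hasDerivAt.ofReal_comp.mul
      ((hφ t ht).ofReal_comp.const_mul I).cexp).congr_deriv ?_
    linear_combination I * cexp (I * φ t) * hgφt
  rw [← intervalIntegral.integral_const_mul, ← intervalIntegral.integral_add hg'e hIe]
  have hcont : ContinuousOn (fun t ↦ (g t : ℂ) * cexp (I * φ t)) (Icc a b) :=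
    (continuous_ofReal.comp_continuousOn hgc).mul (uIcc_of_le hab ▸ hec)
  exact integral_eq_sub_of_hasDerivAt_of_le hab hcont hderiv (hg'e.add hIe)

open Complex in
lemma norm_integral_ofReal_mul_cexp_I_mul_le {f φ : ℝ → ℝ} {a b : ℝ} (hab : a ≤ b) :
    ‖∫ t in a..b, (f t : ℂ) * cexp (I * φ t)‖ ≤ ∫ t in a..b, |f t| :=
  (intervalIntegral.norm_integral_le_integral_norm hab).trans_eq
    (integral_congr fun t _ ↦ by simp [norm_exp])

/-- Lemma 1(a): if `φ` is real, twice continuously differentiable on `[a,b]`, `φ'` has no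
zeros on `[a,b]`, `φ(b) = φ(a) + 2kπ` and `φ'(b) = φ'(a)`, then
`|∫_a^b e^{iφ}| ≤ Var_{[a,b]}(1/φ')`. -/
theorem abs_integral_exp_le_variation
    (a b : ℝ) (hab : a < b) (φ : ℝ → ℝ)
    (hreg : ContDiffOn ℝ 2 φ (Set.Icc a b))
    (hne : ∀ t ∈ Set.Icc a b, derivWithin φ (Set.Icc a b) t ≠ 0)
    (hper : ∃ k : ℤ, φ b = φ a + 2 * (k : ℝ) * π)
    (hd : derivWithin φ (Set.Icc a b) b = derivWithin φ (Set.Icc a b) a) :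
    ENNReal.ofReal
        (‖∫ t in a..b, Complex.exp (Complex.I * (φ t : ℂ))‖) ≤
      eVariationOn (fun t => (derivWithin φ (Set.Icc a b) t)⁻¹) (Set.Icc a b) := by
  set φ' := derivWithin φ (Icc a b)
  set g := fun t ↦ (φ' t)⁻¹
  by_cases hBV : BoundedVariationOn g (Icc a b)
  swap
  · exact (not_ne_iff.mp hBV) ▸ le_top
  have hgC1 : ContDiffOn ℝ 1 g (Icc a b) :=
    (hreg.derivWithin (uniqueDiffOn_Icc hab) (by norm_num)).inv hne
  have hφ (t) (ht : t ∈ Ioo a b) : HasDerivAt φ (φ' t) t :=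
    (hreg.differentiableOn (by norm_num) t (Ioo_subset_Icc_self ht)).hasDerivWithinAt.hasDerivAt
      (Icc_mem_nhds ht.1 ht.2)
  have hg (t) (ht : t ∈ Ioo a b) : DifferentiableAt ℝ g t :=
    (hgC1.differentiableOn one_ne_zero t (Ioo_subset_Icc_self ht)).differentiableAt
      (Icc_mem_nhds ht.1 ht.2)
  have hgφ (t) (ht : t ∈ Ioo a b) : g t * φ' t = 1 :=
    inv_mul_cancel₀ (hne t (Ioo_subset_Icc_self ht))
  have hboundary :
      (g b : ℂ) * Complex.exp (Complex.I * φ b) = g a * Complex.exp (Complex.I * φ a) := by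
    obtain ⟨k, hk⟩ := hper
    have hI : Complex.I * ↑(φ b) = Complex.I * φ a + k * (2 * π * Complex.I) := by
      rw [hk]; push_cast; ring
    rw [hI, Complex.exp_add, Complex.exp_int_mul_two_pi_mul_I, mul_one,
      show g b = g a from congrArg Inv.inv hd]
  have hIBP := integral_deriv_mul_cexp_add_I_mul_integral_cexp hab.le hreg.continuousOn
    hgC1.continuousOn hφ hg hgφ (uIcc_of_le hab.le ▸ hBV).intervalIntegrable_deriv
  rw [hboundary, sub_self, add_eq_zero_iff_eq_neg] at hIBP
  calc ENNReal.ofReal ‖∫ t in a..b, Complex.exp (Complex.I * φ t)‖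
      = ENNReal.ofReal
          ‖∫ t in a..b, ((deriv g t : ℝ) : ℂ) * Complex.exp (Complex.I * φ t)‖ := by
        simp [hIBP]
    _ ≤ ENNReal.ofReal (∫ t in a..b, |deriv g t|) :=
        ENNReal.ofReal_le_ofReal (norm_integral_ofReal_mul_cexp_I_mul_le hab.le)
    _ ≤ eVariationOn g (Icc a b) :=
        ENNReal.ofReal_le_of_le_toReal (hBV.integral_abs_deriv_le hab.le)
end

section
/- Let φ be a real-valued, twice continuously differentiable function on [a, b] such that φ'(t) ≠ 0 for all t ∈ [a, b] and φ' is monotone on [a, b]. Then |∫_a^b e^{iφ(t)} dt| ≤ 2 / min(|φ'(a)|, |φ'(b)|). -/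
/-!
Integrate by parts against `(e^{iφ})' = iφ' e^{iφ}`:
`∫ e^{iφ} = [e^{iφ} / (iφ')]_a^b - ∫ (1 / (iφ'))' e^{iφ}`.
The boundary terms contribute at most `1/|φ'(a)| + 1/|φ'(b)|`. Since `φ'` is monotone and, by the
intermediate value theorem, of constant sign, `1/φ'` is monotone, so the remaining integral is at
most its total variation `|1/φ'(a) - 1/φ'(b)|`. Finally `1/x + 1/y + |1/x - 1/y| = 2 / min x y`
for `x, y > 0`.
-/

open MeasureTheory Set intervalIntegral

theorem inv_add_inv_add_abs_sub_inv {p q : ℝ} (hp : 0 < p) (hq : 0 < q) :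
    p⁻¹ + q⁻¹ + |p⁻¹ - q⁻¹| = 2 / min p q := by
  rcases le_total p q with h | h
  · rw [min_eq_left h, abs_of_nonneg (sub_nonneg.2 (inv_anti₀ hp h))]
    ring
  · rw [min_eq_right h, abs_of_nonpos (sub_nonpos.2 (inv_anti₀ hq h))]
    ring

theorem abs_inv_sub_inv_of_mul_pos {x y : ℝ} (h : 0 < x * y) :
    |x⁻¹ - y⁻¹| = |(|x|⁻¹ - |y|⁻¹)| := by
  rcases pos_and_pos_or_neg_and_neg_of_mul_pos h with ⟨hx, hy⟩ | ⟨hx, hy⟩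
  · rw [abs_of_pos hx, abs_of_pos hy]
  · rw [abs_of_neg hx, abs_of_neg hy, inv_neg, inv_neg, ← abs_neg]
    ring_nf

section

variable {a b : ℝ}

theorem norm_integral_mul_deriv_le {A : Type*} [NormedRing A] [NormedAlgebra ℝ A]
    [CompleteSpace A] {u u' v v' : ℝ → A} (hab : a ≤ b)
    (hu : ∀ x ∈ Icc a b, HasDerivWithinAt u (u' x) (Icc a b) x)
    (hv : ∀ x ∈ Icc a b, HasDerivWithinAt v (v' x) (Icc a b) x)
    (hu' : IntervalIntegrable u' volume a b) (hv' : IntervalIntegrable v' volume a b)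
    (hv_le : ∀ x ∈ Icc a b, ‖v x‖ ≤ 1) :
    ‖∫ x in a..b, u x * v' x‖ ≤ ‖u a‖ + ‖u b‖ + ∫ x in a..b, ‖u' x‖ := by
  have hmul_le : ∀ x ∈ Icc a b, ∀ w : A, ‖w * v x‖ ≤ ‖w‖ := fun x hx w =>
    (norm_mul_le _ _).trans (mul_le_of_le_one_right (norm_nonneg _) (hv_le x hx))
  rw [← uIcc_of_le hab] at hu hv
  rw [integral_mul_deriv_eq_deriv_mul_of_hasDerivWithinAt hu hv hu' hv']
  have hint : ‖∫ x in a..b, u' x * v x‖ ≤ ∫ x in a..b, ‖u' x‖ :=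
    norm_integral_le_of_norm_le hab (ae_of_all _ fun x hx =>
      hmul_le x (Ioc_subset_Icc_self hx) _) hu'.norm
  calc ‖u b * v b - u a * v a - ∫ x in a..b, u' x * v x‖
      ≤ ‖u b * v b‖ + ‖u a * v a‖ + ‖∫ x in a..b, u' x * v x‖ :=
        (norm_sub_le _ _).trans (by gcongr; exact norm_sub_le _ _)
    _ ≤ ‖u b‖ + ‖u a‖ + ∫ x in a..b, ‖u' x‖ := by
      gcongr
      · exact hmul_le b (right_mem_Icc.2 hab) _
      · exact hmul_le a (left_mem_Icc.2 hab) _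
    _ = ‖u a‖ + ‖u b‖ + ∫ x in a..b, ‖u' x‖ := by ring

theorem norm_integral_cexp_I_mul_le {φ ψ ψ' : ℝ → ℝ} (hab : a ≤ b)
    (hφ : ∀ t ∈ Icc a b, HasDerivWithinAt φ (ψ t) (Icc a b) t)
    (hψ : ∀ t ∈ Icc a b, HasDerivWithinAt ψ (ψ' t) (Icc a b) t)
    (hψ' : ContinuousOn ψ' (Icc a b)) (hne : ∀ t ∈ Icc a b, ψ t ≠ 0) :
    ‖∫ t in a..b, Complex.exp (Complex.I * φ t)‖ ≤
      |ψ a|⁻¹ + |ψ b|⁻¹ + ∫ t in a..b, |ψ' t / ψ t ^ 2| := by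
  have hψc : ContinuousOn ψ (Icc a b) := fun t ht => (hψ t ht).continuousWithinAt
  have hφc : ContinuousOn φ (Icc a b) := fun t ht => (hφ t ht).continuousWithinAt
  -- `e^{iφ} = ψ⁻¹ · (ψ e^{iφ})`, and `ψ e^{iφ}` is the derivative of `-i e^{iφ}`
  have hsplit : ∫ t in a..b, Complex.exp (Complex.I * φ t) =
      ∫ t in a..b, ((ψ t)⁻¹ : ℝ) * ((ψ t : ℂ) * Complex.exp (Complex.I * φ t)) := by
    refine integral_congr fun t ht => ?_
    have : (ψ t : ℂ) ≠ 0 := Complex.ofReal_ne_zero.2 (hne t (uIcc_of_le hab ▸ ht))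
    push_cast
    field_simp
  have hu : ∀ t ∈ Icc a b, HasDerivWithinAt (fun t => (((ψ t)⁻¹ : ℝ) : ℂ))
      ((-ψ' t / ψ t ^ 2 : ℝ) : ℂ) (Icc a b) t := fun t ht =>
    ((hψ t ht).inv (hne t ht)).ofReal_comp
  have hv : ∀ t ∈ Icc a b,
      HasDerivWithinAt (fun t => -Complex.I * Complex.exp (Complex.I * φ t))
        ((ψ t : ℂ) * Complex.exp (Complex.I * φ t)) (Icc a b) t := by
    intro t ht
    refine (((hφ t ht).ofReal_comp.const_mul Complex.I).cexp.const_mul (-Complex.I)).congr_deriv ?_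
    linear_combination -(↑(ψ t) * Complex.exp (Complex.I * ↑(φ t))) * Complex.I_sq
  have hu' : IntervalIntegrable (fun t => ((-ψ' t / ψ t ^ 2 : ℝ) : ℂ)) volume a b := by
    refine ContinuousOn.intervalIntegrable_of_Icc hab ?_
    exact Complex.continuous_ofReal.comp_continuousOn
      (hψ'.neg.div (hψc.pow 2) fun t ht => pow_ne_zero 2 (hne t ht))
  have hv' :
      IntervalIntegrable (fun t => (ψ t : ℂ) * Complex.exp (Complex.I * φ t)) volume a b :=
    ContinuousOn.intervalIntegrable_of_Icc hab (by fun_prop)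
  rw [hsplit]
  refine (norm_integral_mul_deriv_le hab hu hv hu' hv' fun t _ => ?_).trans_eq ?_
  · simp [Complex.norm_exp]
  · simp [neg_div, abs_div]

theorem integral_abs_eq_abs_sub_of_hasDerivWithinAt {f f' : ℝ → ℝ} (hab : a ≤ b)
    (hf : ∀ x ∈ Icc a b, HasDerivWithinAt f (f' x) (Icc a b) x)
    (hf' : IntervalIntegrable f' volume a b)
    (hsign : (∀ x ∈ Icc a b, 0 ≤ f' x) ∨ ∀ x ∈ Icc a b, f' x ≤ 0) :
    ∫ x in a..b, |f' x| = |f b - f a| := by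
  have hftc : ∫ x in a..b, f' x = f b - f a :=
    integral_eq_sub_of_hasDerivAt_of_le hab (fun x hx => (hf x hx).continuousWithinAt)
      (fun x hx => (hf x (Ioo_subset_Icc_self hx)).hasDerivAt (Icc_mem_nhds hx.1 hx.2)) hf'
  rw [← hftc]
  rcases hsign with hpos | hneg
  · have hpos' : ∀ x ∈ uIcc a b, 0 ≤ f' x := uIcc_of_le hab ▸ hpos
    rw [integral_congr fun x hx => abs_of_nonneg (hpos' x hx),
      abs_of_nonneg (integral_nonneg hab fun x hx => hpos x hx)]
  · have hneg' : ∀ x ∈ uIcc a b, f' x ≤ 0 := uIcc_of_le hab ▸ hneg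
    rw [integral_congr fun x hx => abs_of_nonpos (hneg' x hx), intervalIntegral.integral_neg,
      abs_of_nonpos (by simpa using integral_nonneg hab fun x hx => neg_nonneg.2 (hneg x hx))]

theorem ContinuousOn.mul_pos_of_forall_ne_zero {f : ℝ → ℝ} (hab : a ≤ b)
    (hf : ContinuousOn f (Icc a b)) (hne : ∀ x ∈ Icc a b, f x ≠ 0) : 0 < f a * f b := by
  by_contra! h
  have hzero : (0 : ℝ) ∈ uIcc (f a) (f b) := by
    rcases mul_nonpos_iff.1 h with h | h
    · exact mem_uIcc.2 (Or.inr ⟨h.2, h.1⟩)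
    · exact mem_uIcc.2 (Or.inl ⟨h.1, h.2⟩)
  rw [← uIcc_of_le hab] at hf hne
  obtain ⟨c, hc, hfc⟩ := intermediate_value_uIcc hf hzero
  exact hne c hc hfc

theorem norm_integral_cexp_I_mul_le_two_div_min {φ ψ ψ' : ℝ → ℝ} (hab : a ≤ b)
    (hφ : ∀ t ∈ Icc a b, HasDerivWithinAt φ (ψ t) (Icc a b) t)
    (hψ : ∀ t ∈ Icc a b, HasDerivWithinAt ψ (ψ' t) (Icc a b) t)
    (hψ' : ContinuousOn ψ' (Icc a b)) (hne : ∀ t ∈ Icc a b, ψ t ≠ 0)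
    (hsign : (∀ t ∈ Icc a b, 0 ≤ ψ' t) ∨ ∀ t ∈ Icc a b, ψ' t ≤ 0) :
    ‖∫ t in a..b, Complex.exp (Complex.I * φ t)‖ ≤ 2 / min |ψ a| |ψ b| := by
  have hψc : ContinuousOn ψ (Icc a b) := fun t ht => (hψ t ht).continuousWithinAt
  have hψ_inv : ∀ t ∈ Icc a b, HasDerivWithinAt (fun t => -(ψ t)⁻¹) (ψ' t / ψ t ^ 2)
      (Icc a b) t := fun t ht =>
    ((hψ t ht).inv (hne t ht)).neg.congr_deriv (by ring)
  have hint : IntervalIntegrable (fun t => ψ' t / ψ t ^ 2) volume a b :=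
    ContinuousOn.intervalIntegrable_of_Icc hab
      (hψ'.div (hψc.pow 2) fun t ht => pow_ne_zero 2 (hne t ht))
  have hsign' :
      (∀ t ∈ Icc a b, 0 ≤ ψ' t / ψ t ^ 2) ∨ ∀ t ∈ Icc a b, ψ' t / ψ t ^ 2 ≤ 0 :=
    hsign.imp (fun h t ht => div_nonneg (h t ht) (sq_nonneg _))
      (fun h t ht => div_nonpos_of_nonpos_of_nonneg (h t ht) (sq_nonneg _))
  calc ‖∫ t in a..b, Complex.exp (Complex.I * φ t)‖
      ≤ |ψ a|⁻¹ + |ψ b|⁻¹ + ∫ t in a..b, |ψ' t / ψ t ^ 2| :=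
        norm_integral_cexp_I_mul_le hab hφ hψ hψ' hne
    _ = |ψ a|⁻¹ + |ψ b|⁻¹ + |(|ψ a|⁻¹ - |ψ b|⁻¹)| := by
        rw [integral_abs_eq_abs_sub_of_hasDerivWithinAt hab hψ_inv hint hsign', neg_sub_neg,
          abs_inv_sub_inv_of_mul_pos (hψc.mul_pos_of_forall_ne_zero hab hne)]
    _ = 2 / min |ψ a| |ψ b| :=
        inv_add_inv_add_abs_sub_inv (abs_pos.2 (hne a (left_mem_Icc.2 hab)))
          (abs_pos.2 (hne b (right_mem_Icc.2 hab)))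

end

/-- Lemma 1(b): if `φ` is real, twice continuously differentiable on `[a,b]`, `φ'` has no
zeros on `[a,b]` and `φ'` is monotone on `[a,b]`, then
`|∫_a^b e^{iφ}| ≤ 2 / min(|φ'(a)|, |φ'(b)|)`. -/
theorem abs_integral_exp_le_two_div_min
    (a b : ℝ) (hab : a < b) (φ : ℝ → ℝ)
    (hreg : ContDiffOn ℝ 2 φ (Set.Icc a b))
    (hne : ∀ t ∈ Set.Icc a b, derivWithin φ (Set.Icc a b) t ≠ 0)
    (hmono : MonotoneOn (derivWithin φ (Set.Icc a b)) (Set.Icc a b) ∨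
      AntitoneOn (derivWithin φ (Set.Icc a b)) (Set.Icc a b)) :
    ‖∫ t in a..b, Complex.exp (Complex.I * (φ t : ℂ))‖ ≤
      2 / min |derivWithin φ (Set.Icc a b) a| |derivWithin φ (Set.Icc a b) b| := by
  set ψ := derivWithin φ (Icc a b)
  have hIcc : UniqueDiffOn ℝ (Icc a b) := uniqueDiffOn_Icc hab
  have hψ_C1 : ContDiffOn ℝ 1 ψ (Icc a b) := hreg.derivWithin hIcc (by norm_num)
  refine norm_integral_cexp_I_mul_le_two_div_min hab.le
    (fun t ht => (hreg.differentiableOn two_ne_zero t ht).hasDerivWithinAt)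
    (fun t ht => (hψ_C1.differentiableOn one_ne_zero t ht).hasDerivWithinAt)
    (hψ_C1.continuousOn_derivWithin hIcc le_rfl) hne ?_
  exact hmono.imp (fun h _ _ => h.derivWithin_nonneg) (fun h _ _ => h.derivWithin_nonpos)
end

section
/- Let f be a real- or complex-valued function on (a, b] that is Riemann integrable on [c, b] for every c ∈ (a, b), and suppose the improper integral ∫_{a+}^b f exists. Suppose there is a monotone decreasing function M on (a, b] with |f(x)| ≤ M(x) for all x ∈ (a, b] and with finite improper integral ∫_{a+}^b M < ∞. For n ≥ 1 set a_{j,n} = a + j(b − a)/n for j = 0, …, n, and let ξ_{j,n} be any points with a_{j−1,n} ≤ ξ_{j,n} ≤ a_{j,n}. Then the modified equidistant Riemann sums obtained by omitting the initial summand, namely ((b − a)/n) Σ_{j=2}^n f(ξ_{j,n}), converge to ∫_{a+}^b f as n → ∞. -/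
open MeasureTheory Filter Set intervalIntegral
open scoped Real Topology

/-!
Put `h = (b - a) / n`. The modified Riemann sum is the integral over `(a, b]` of the step function
equal to `f (ξ n j)` on the cell `(a + (j - 1) h, a + j h]` for `2 ≤ j ≤ n` and to `0` on the
first cell. These step functions converge to `f` at every continuity point of `f`, hence almost
everywhere by Lebesgue's criterion. Because the first cell is left out, the tag of the cell
containing `x` lies to the right of `(x + a) / 2`, so the step functions are dominated by
`x ↦ M ((x + a) / 2)`, which is integrable since `M` is. Dominated convergence gives the limit
`∫ x in Ioc a b, f x`, and this is `L` because `f` is integrable on `(a, b]`.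
-/

/-- `f` is Riemann integrable on `[a,b]`: bounded there and (by Lebesgue's criterion)
continuous at almost every point of `[a,b]`.  For such functions the Riemann integral
coincides with the Lebesgue integral `∫ x in a..b, f x`. -/
def RiemannIntegrableOn (f : ℝ → ℂ) (a b : ℝ) : Prop :=
  (∃ M : ℝ, ∀ x ∈ Set.Icc a b, ‖f x‖ ≤ M) ∧
    ∀ᵐ x ∂(volume.restrict (Set.Icc a b)), ContinuousWithinAt f (Set.Icc a b) x

section ImproperIntegral

variable {E : Type*} [NormedAddCommGroup E] {a b : ℝ}

theorem ae_restrict_Ioc_of_forall_Ioo {p : ℝ → Prop}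
    (h : ∀ c ∈ Ioo a b, ∀ᵐ x ∂volume.restrict (Ioo c b), p x) :
    ∀ᵐ x ∂volume.restrict (Ioc a b), p x := by
  rcases le_or_gt b a with hba | hab
  · simp [Ioc_eq_empty_of_le hba]
  obtain ⟨u, -, hu, hua⟩ := exists_seq_strictAnti_tendsto' hab
  have hcover : Ioo a b = ⋃ n, Ioo (u n) b := by
    ext x
    simp only [mem_iUnion, mem_Ioo]
    refine ⟨fun hx => ?_, fun ⟨n, hnx, hxb⟩ => ⟨(hu n).1.trans hnx, hxb⟩⟩
    obtain ⟨n, hn⟩ := (hua.eventually_lt_const hx.1).exists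
    exact ⟨n, hn, hx.2⟩
  rw [← Measure.restrict_congr_set Ioo_ae_eq_Ioc, hcover, ae_restrict_iUnion_iff]
  exact fun n => h (u n) (hu n)

theorem integrableOn_Ioc_of_tendsto_intervalIntegral {f : ℝ → ℝ} {K : ℝ}
    (hf₀ : ∀ x ∈ Ioc a b, 0 ≤ f x) (hfi : ∀ c ∈ Ioo a b, IntegrableOn f (Ioc c b))
    (hK : Tendsto (fun c => ∫ x in c..b, f x) (𝓝[>] a) (𝓝 K)) :
    IntegrableOn f (Ioc a b) := by
  rcases le_or_gt b a with hba | hab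
  · simp [Ioc_eq_empty_of_le hba]
  obtain ⟨u, -, hu, hua⟩ := exists_seq_strictAnti_tendsto' hab
  have hua' : Tendsto u atTop (𝓝[>] a) :=
    tendsto_nhdsWithin_of_tendsto_nhds_of_eventually_within _ hua
      (Eventually.of_forall fun n => (hu n).1)
  obtain ⟨I, hI⟩ := (hK.comp hua').isBoundedUnder_le
  replace hI : ∀ᶠ n in atTop, ∫ x in u n..b, f x ≤ I := hI
  refine integrableOn_Ioc_of_intervalIntegral_norm_bounded_left (fun n => hfi _ (hu n)) hua
    (hI.mono fun n hn => le_of_eq_of_le ?_ hn)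
  rw [intervalIntegral.integral_of_le (hu n).2.le]
  refine setIntegral_congr_fun measurableSet_Ioc fun x hx => Real.norm_of_nonneg ?_
  exact hf₀ x ⟨(hu n).1.trans hx.1, hx.2⟩

theorem IntegrableOn.comp_add_div_two {f : ℝ → E} (hf : IntegrableOn f (Ioc a b)) :
    IntegrableOn (fun x => f ((x + a) / 2)) (Ioc a b) := by
  have h := ((integrable_indicator_iff measurableSet_Ioc).2 hf).comp_div two_ne_zero
    |>.comp_add_right a
  refine h.integrableOn.congr_fun (fun x hx => indicator_of_mem ?_ f) measurableSet_Ioc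
  constructor <;> linarith [hx.1, hx.2]

theorem tendsto_intervalIntegral_nhdsGT [NormedSpace ℝ E] {f : ℝ → E} (hab : a < b)
    (hf : IntegrableOn f (Ioc a b)) :
    Tendsto (fun c => ∫ x in c..b, f x) (𝓝[>] a) (𝓝 (∫ x in Ioc a b, f x)) := by
  have hf' : IntegrableOn f (uIcc a b) := by
    rwa [uIcc_of_le hab.le, integrableOn_Icc_iff_integrableOn_Ioc]
  have hcont := intervalIntegral.continuousOn_primitive_interval_left hf'
  rw [uIcc_of_le hab.le] at hcont
  rw [← intervalIntegral.integral_of_le hab.le]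
  exact (hcont a (left_mem_Icc.2 hab.le)).mono_of_mem_nhdsWithin (Icc_mem_nhdsGT hab)

end ImproperIntegral

theorem RiemannIntegrableOn.ae_continuousAt {f : ℝ → ℂ} {a b : ℝ}
    (hf : RiemannIntegrableOn f a b) :
    ∀ᵐ x ∂volume.restrict (Ioo a b), ContinuousAt f x := by
  filter_upwards [ae_restrict_of_ae_restrict_of_subset Ioo_subset_Icc_self hf.2,
    ae_restrict_mem measurableSet_Ioo] with x hx hxab
  exact hx.continuousAt (Icc_mem_nhds hxab.1 hxab.2)

section Grid

variable {E : Type*} [NormedAddCommGroup E] {a h x : ℝ} {j : ℕ}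

def gridCell (a h : ℝ) (j : ℕ) : Set ℝ := Ioc (a + (j - 1) * h) (a + j * h)

theorem mem_gridCell_iff (hh : 0 < h) (hj : j ≠ 0) :
    x ∈ gridCell a h j ↔ ⌈(x - a) / h⌉₊ = j := by
  rw [Nat.ceil_eq_iff hj, Nat.cast_pred (Nat.pos_of_ne_zero hj), lt_div_iff₀ hh, div_le_iff₀ hh,
    gridCell, mem_Ioc]
  constructor <;> rintro ⟨h₁, h₂⟩ <;> constructor <;> linarith

theorem add_div_two_le_of_mem_gridCell (hh : 0 ≤ h) (hj : 2 ≤ j) (hx : x ∈ gridCell a h j) :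
    (x + a) / 2 ≤ a + (j - 1) * h := by
  have hj' : (2 : ℝ) ≤ j := by exact_mod_cast hj
  nlinarith [hx.2]

theorem gridCell_subset_Ioc {n : ℕ} (hh : 0 ≤ h) (hj : 1 ≤ j) (hjn : j ≤ n) :
    gridCell a h j ⊆ Ioc a (a + n * h) := by
  have hj' : (1 : ℝ) ≤ j := by exact_mod_cast hj
  have hjn' : (j : ℝ) ≤ n := by exact_mod_cast hjn
  exact Ioc_subset_Ioc (by nlinarith) (by nlinarith)

theorem ceil_sub_div_mem_Icc {n : ℕ} (hh : 0 < h) (hx : a + h < x) (hxn : x ≤ a + n * h) :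
    ⌈(x - a) / h⌉₊ ∈ Finset.Icc 2 n := by
  refine Finset.mem_Icc.2 ⟨Nat.lt_ceil.2 ?_, Nat.ceil_le.2 ?_⟩
  · rw [Nat.cast_one, one_lt_div hh]
    linarith
  · rw [div_le_iff₀ hh]
    linarith

noncomputable def stepFunction (a h : ℝ) (s : Finset ℕ) (c : ℕ → E) (x : ℝ) : E :=
  ∑ j ∈ s, (gridCell a h j).indicator (fun _ => c j) x

theorem stepFunction_apply (hh : 0 < h) {s : Finset ℕ} (hs : 0 ∉ s) (c : ℕ → E) :
    stepFunction a h s c x = if ⌈(x - a) / h⌉₊ ∈ s then c ⌈(x - a) / h⌉₊ else 0 := by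
  classical
  rw [stepFunction, ← Finset.sum_ite_eq]
  refine Finset.sum_congr rfl fun j hj => ?_
  simp only [indicator_apply, mem_gridCell_iff hh (ne_of_mem_of_not_mem hj hs)]

theorem setIntegral_stepFunction [NormedSpace ℝ E] [CompleteSpace E] (hh : 0 < h)
    {s : Finset ℕ} {t : Set ℝ} (hst : ∀ j ∈ s, gridCell a h j ⊆ t) (c : ℕ → E) :
    ∫ x in t, stepFunction a h s c x = h • ∑ j ∈ s, c j := by
  have hmeas : ∀ j, MeasurableSet (gridCell a h j) := fun j => measurableSet_Ioc
  simp only [stepFunction]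
  rw [MeasureTheory.integral_finsetSum, Finset.smul_sum]
  · refine Finset.sum_congr rfl fun j hj => ?_
    rw [setIntegral_indicator (hmeas j), inter_eq_right.2 (hst j hj), setIntegral_const, gridCell,
      Real.volume_real_Ioc_of_le (by nlinarith)]
    congr 1
    ring
  · exact fun j _ => ((integrable_indicator_iff (hmeas j)).2 (integrableOn_const
      (measure_Ioc_lt_top.ne))).restrict

end Grid

section RiemannSum

variable {E : Type*} [NormedAddCommGroup E] {a b : ℝ} {ξ : ℕ → ℕ → ℝ}

theorem add_natCast_mul_sub_div {n : ℕ} (hn : n ≠ 0) : a + n * ((b - a) / n) = b := by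
  field_simp
  ring

theorem norm_stepFunction_le {f : ℝ → E} {M : ℝ → ℝ} (hM : AntitoneOn M (Ioc a b))
    (hfM : ∀ x ∈ Ioc a b, ‖f x‖ ≤ M x)
    (hξ : ∀ n : ℕ, ∀ j ∈ Finset.Icc 1 n,
      ξ n j ∈ Icc (a + (j - 1) * ((b - a) / n)) (a + j * ((b - a) / n)))
    (n : ℕ) {x : ℝ} (hx : x ∈ Ioc a b) :
    ‖stepFunction a ((b - a) / n) (Finset.Icc 2 n) (fun j => f (ξ n j)) x‖ ≤ M ((x + a) / 2) := by
  have hmid : (x + a) / 2 ∈ Ioc a b := ⟨by linarith [hx.1], by linarith [hx.1, hx.2]⟩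
  have hM₀ : 0 ≤ M ((x + a) / 2) := (norm_nonneg _).trans (hfM _ hmid)
  rcases Nat.eq_zero_or_pos n with rfl | hn
  · simpa [stepFunction] using hM₀
  have hh : 0 < (b - a) / n := div_pos (by linarith [hx.1, hx.2]) (Nat.cast_pos.2 hn)
  rw [stepFunction_apply hh (by simp)]
  split_ifs with hJ
  · set J := ⌈(x - a) / ((b - a) / n)⌉₊
    obtain ⟨hJ₂, hJn⟩ := Finset.mem_Icc.1 hJ
    have hxJ : x ∈ gridCell a ((b - a) / n) J := (mem_gridCell_iff hh (by omega)).2 rfl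
    have hξJ := hξ n J (Finset.mem_Icc.2 ⟨by omega, hJn⟩)
    have hξab : ξ n J ∈ Ioc a b := by
      have hJ₂' : (2 : ℝ) ≤ J := by exact_mod_cast hJ₂
      have hJn' : (J : ℝ) ≤ n := by exact_mod_cast hJn
      have hb := add_natCast_mul_sub_div (a := a) (b := b) hn.ne'
      constructor <;> nlinarith [hξJ.1, hξJ.2]
    calc ‖f (ξ n J)‖ ≤ M (ξ n J) := hfM _ hξab
      _ ≤ M ((x + a) / 2) :=
        hM hmid hξab ((add_div_two_le_of_mem_gridCell hh.le hJ₂ hxJ).trans hξJ.1)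
  · simpa using hM₀

theorem tendsto_stepFunction {f : ℝ → E}
    (hξ : ∀ n : ℕ, ∀ j ∈ Finset.Icc 1 n,
      ξ n j ∈ Icc (a + (j - 1) * ((b - a) / n)) (a + j * ((b - a) / n)))
    {x : ℝ} (hx : x ∈ Ioc a b) (hfx : ContinuousAt f x) :
    Tendsto (fun n : ℕ => stepFunction a ((b - a) / n) (Finset.Icc 2 n) (fun j => f (ξ n j)) x)
      atTop (𝓝 (f x)) := by
  set J : ℕ → ℕ := fun n => ⌈(x - a) / ((b - a) / n)⌉₊
  have hev : ∀ᶠ n : ℕ in atTop,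
      stepFunction a ((b - a) / n) (Finset.Icc 2 n) (fun j => f (ξ n j)) x = f (ξ n (J n)) ∧
        ‖ξ n (J n) - x‖ ≤ (b - a) / n := by
    filter_upwards [(tendsto_const_div_atTop_nhds_zero_nat (b - a)).eventually_lt_const
      (sub_pos.2 hx.1), eventually_gt_atTop 0] with n hnx hn
    have hh : 0 < (b - a) / n := div_pos (by linarith [hx.1, hx.2]) (Nat.cast_pos.2 hn)
    have hJ : J n ∈ Finset.Icc 2 n := ceil_sub_div_mem_Icc hh (by linarith)
      (by rw [add_natCast_mul_sub_div hn.ne']; exact hx.2)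
    obtain ⟨hJ₂, hJn⟩ := Finset.mem_Icc.1 hJ
    have hxJ : x ∈ gridCell a ((b - a) / n) (J n) := (mem_gridCell_iff hh (by omega)).2 rfl
    have hξJ := hξ n (J n) (Finset.mem_Icc.2 ⟨by omega, hJn⟩)
    refine ⟨by rw [stepFunction_apply hh (by simp), if_pos hJ], ?_⟩
    rw [Real.norm_eq_abs, abs_sub_le_iff]
    constructor <;> linarith [hxJ.1, hxJ.2, hξJ.1, hξJ.2]
  have hξx : Tendsto (fun n => ξ n (J n)) atTop (𝓝 x) := by
    rw [tendsto_iff_norm_sub_tendsto_zero]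
    exact squeeze_zero' (Eventually.of_forall fun n => norm_nonneg _) (hev.mono fun n hn => hn.2)
      (tendsto_const_div_atTop_nhds_zero_nat _)
  exact (hfx.tendsto.comp hξx).congr' (hev.mono fun n hn => hn.1.symm)

theorem setIntegral_stepFunction_Icc_two [NormedSpace ℝ E] [CompleteSpace E] (hab : a < b) {n : ℕ}
    (hn : n ≠ 0) (c : ℕ → E) :
    ∫ x in Ioc a b, stepFunction a ((b - a) / n) (Finset.Icc 2 n) c x =
      ((b - a) / n) • ∑ j ∈ Finset.Icc 2 n, c j := by
  have hh : 0 < (b - a) / n := div_pos (sub_pos.2 hab) (Nat.cast_pos.2 (Nat.pos_of_ne_zero hn))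
  refine setIntegral_stepFunction hh (fun j hj => ?_) c
  obtain ⟨hj₂, hjn⟩ := Finset.mem_Icc.1 hj
  exact (gridCell_subset_Ioc hh.le (by omega) hjn).trans_eq (by rw [add_natCast_mul_sub_div hn])

end RiemannSum

/-- Lemma 2: if `f` is Riemann integrable on `[c,b]` for every `c ∈ (a,b)`, the improper
integral `∫_{a+}^b f = L` exists, and `|f|` is dominated on `(a,b]` by a monotone
decreasing function `M` with finite improper integral, then the equidistant Riemann
sums of `f` modified by omission of the initial summand converge to `L`. -/
theorem modified_riemann_sums_tendsto
    (a b : ℝ) (hab : a < b) (f : ℝ → ℂ) (L : ℂ)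
    (hRiem : ∀ c ∈ Set.Ioo a b, RiemannIntegrableOn f c b)
    (hL : Tendsto (fun c : ℝ => ∫ x in c..b, f x) (nhdsWithin a (Set.Ioi a)) (nhds L))
    (M : ℝ → ℝ) (hManti : AntitoneOn M (Set.Ioc a b))
    (hMmaj : ∀ x ∈ Set.Ioc a b, ‖f x‖ ≤ M x)
    (hMfin : ∃ K : ℝ,
      Tendsto (fun c : ℝ => ∫ x in c..b, M x) (nhdsWithin a (Set.Ioi a)) (nhds K))
    (ξ : ℕ → ℕ → ℝ)
    (hξ : ∀ n : ℕ, ∀ j ∈ Finset.Icc 1 n,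
      ξ n j ∈ Set.Icc (a + (j - 1 : ℝ) * (b - a) / n) (a + (j : ℝ) * (b - a) / n)) :
    Tendsto
      (fun n : ℕ => (((b - a) / n : ℝ) : ℂ) * ∑ j ∈ Finset.Icc 2 n, f (ξ n j))
      atTop (nhds L) := by
  obtain ⟨K, hK⟩ := hMfin
  replace hξ : ∀ n : ℕ, ∀ j ∈ Finset.Icc 1 n,
      ξ n j ∈ Icc (a + (j - 1) * ((b - a) / n)) (a + j * ((b - a) / n)) := by
    simpa only [mul_div_assoc] using hξ
  set g : ℕ → ℝ → ℂ := fun n => stepFunction a ((b - a) / n) (Finset.Icc 2 n) fun j => f (ξ n j)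
  have hMint : IntegrableOn M (Ioc a b) := by
    refine integrableOn_Ioc_of_tendsto_intervalIntegral
      (fun x hx => (norm_nonneg _).trans (hMmaj x hx)) (fun c hc => ?_) hK
    exact ((hManti.mono (Icc_subset_Ioc_iff hc.2.le |>.2 ⟨hc.1, le_rfl⟩)).integrableOn_isCompact
      isCompact_Icc).mono_set Ioc_subset_Icc_self
  have hgmeas : ∀ n, AEStronglyMeasurable (g n) (volume.restrict (Ioc a b)) := fun n =>
    Finset.aestronglyMeasurable_fun_sum _ fun j _ =>
      aestronglyMeasurable_const.indicator measurableSet_Ioc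
  have hbound : ∀ n, ∀ᵐ x ∂volume.restrict (Ioc a b), ‖g n x‖ ≤ M ((x + a) / 2) := fun n =>
    (ae_restrict_mem measurableSet_Ioc).mono fun x hx => norm_stepFunction_le hManti hMmaj hξ n hx
  have hlim : ∀ᵐ x ∂volume.restrict (Ioc a b), Tendsto (g · x) atTop (𝓝 (f x)) := by
    filter_upwards [ae_restrict_Ioc_of_forall_Ioo fun c hc => (hRiem c hc).ae_continuousAt,
      ae_restrict_mem measurableSet_Ioc] with x hfx hx
    exact tendsto_stepFunction hξ hx hfx
  have hfint : IntegrableOn f (Ioc a b) :=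
    hMint.mono' (aestronglyMeasurable_of_tendsto_ae _ hgmeas hlim)
      ((ae_restrict_mem measurableSet_Ioc).mono hMmaj)
  rw [← tendsto_nhds_unique (tendsto_intervalIntegral_nhdsGT hab hfint) hL]
  refine (tendsto_integral_of_dominated_convergence _ hgmeas
    (IntegrableOn.comp_add_div_two hMint) hbound hlim).congr' ?_
  filter_upwards [eventually_ne_atTop 0] with n hn
  rw [setIntegral_stepFunction_Icc_two hab hn, Complex.real_smul]
end

section
/- Let a be an irrational real number and b > a, and let f(x) = (x − a)^{−1/2} on (a, b]. Then the full equidistant Riemann sums S_n = (1/n) Σ_{k ∈ ℤ, a·n < k < b·n} (k/n − a)^{−1/2} do NOT converge to the improper integral ∫_{a+}^b (x − a)^{−1/2} dx = 2√(b − a); in fact, limsup_{n→∞} S_n ≥ 2√(b − a) + 1. -/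
open MeasureTheory Filter Set
open scoped Real Topology

/-!
Farey brackets `p₁/q₁ < a < p₂/q₂` with `p₂ q₁ - p₁ q₂ = 1` whose right denominator is the
smaller one exist with arbitrarily large denominators, and their right ends satisfy
`0 < p₂ - a q₂ < 1/q₂`. For `n = q₂` the summand at `k = p₂` is `(q₂ (p₂ - a q₂))^{-1/2} ≥ 1`,
while the remaining summands dominate the integral of the decreasing function `(x - a)^{-1/2}`
over `[(p₂ + 1)/q₂, b]`, which is `2√(b - a) - O(q₂^{-1/2})`.
-/

structure IsFareyBracket (a : ℝ) (p₁ : ℤ) (q₁ : ℕ) (p₂ : ℤ) (q₂ : ℕ) : Prop where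
  left_den_pos : 0 < q₁
  right_den_pos : 0 < q₂
  left_lt : (p₁ : ℝ) < a * q₁
  lt_right : a * q₂ < p₂
  det_eq_one : p₂ * q₁ - p₁ * q₂ = 1

namespace IsFareyBracket

variable {a : ℝ} {p₁ p₂ : ℤ} {q₁ q₂ : ℕ}

lemma neg (h : IsFareyBracket a p₁ q₁ p₂ q₂) : IsFareyBracket (-a) (-p₂) q₂ (-p₁) q₁ where
  left_den_pos := h.right_den_pos
  right_den_pos := h.left_den_pos
  left_lt := by push_cast; linarith [h.lt_right]
  lt_right := by push_cast; linarith [h.left_lt]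
  det_eq_one := by linear_combination h.det_eq_one

lemma right_den_mul_sub_lt_one (h : IsFareyBracket a p₁ q₁ p₂ q₂) (hq : q₂ ≤ q₁) :
    q₂ * (p₂ - a * q₂) < 1 := by
  have hq₁ : (0 : ℝ) < q₁ := by exact_mod_cast h.left_den_pos
  have hq₂ : (0 : ℝ) < q₂ := by exact_mod_cast h.right_den_pos
  have hqR : (q₂ : ℝ) ≤ q₁ := by exact_mod_cast hq
  have hdet : (p₂ : ℝ) * q₁ - p₁ * q₂ = 1 := by exact_mod_cast h.det_eq_one
  nlinarith [h.left_lt, h.lt_right]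

/-- Moves the left end through the mediants `(p₁ + k p₂)/(q₁ + k q₂)` up to the last one below
`a`; the next mediant becomes the new right end. -/
lemma exists_right_den_eq_add (h : IsFareyBracket a p₁ q₁ p₂ q₂) (ha : Irrational a) :
    ∃ p₁' q₁' p₂', q₁ ≤ q₁' ∧ IsFareyBracket a p₁' q₁' p₂' (q₁' + q₂) := by
  have hq₁ := h.left_den_pos
  have hgap : 0 < p₂ - a * q₂ := sub_pos.2 h.lt_right
  set k := ⌊(a * q₁ - p₁) / (p₂ - a * q₂)⌋₊
  have hk_le : k * (p₂ - a * q₂) ≤ a * q₁ - p₁ :=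
    (le_div_iff₀ hgap).1 (Nat.floor_le (div_nonneg (sub_nonneg.2 h.left_lt.le) hgap.le))
  have hk_lt : a * q₁ - p₁ < (k + 1) * (p₂ - a * q₂) :=
    (div_lt_iff₀ hgap).1 (Nat.lt_floor_add_one _)
  have hne : a * ((q₁ + k * q₂ : ℕ) : ℝ) ≠ ((p₁ + k * p₂ : ℤ) : ℝ) :=
    (ha.mul_natCast (by positivity)).ne_int _
  refine ⟨p₁ + k * p₂, q₁ + k * q₂, p₁ + (k + 1) * p₂, by omega, ?_⟩
  refine ⟨by positivity, by positivity, ?_, ?_, ?_⟩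
  · push_cast at hne ⊢
    exact lt_of_le_of_ne (by linarith) (Ne.symm hne)
  · push_cast; linarith
  · push_cast; linear_combination h.det_eq_one

lemma exists_left_den_eq_add (h : IsFareyBracket a p₁ q₁ p₂ q₂) (ha : Irrational a) :
    ∃ p₁' p₂' q₂', q₂ ≤ q₂' ∧ IsFareyBracket a p₁' (q₂' + q₁) p₂' q₂' := by
  obtain ⟨P₁, Q₁, P₂, hQ, hB⟩ := h.neg.exists_right_den_eq_add ha.neg
  exact ⟨-P₂, -P₁, Q₁, hQ, by simpa using hB.neg⟩

end IsFareyBracket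

lemma exists_isFareyBracket_le_right_den {a : ℝ} (ha : Irrational a) (N : ℕ) :
    ∃ p₁ q₁ p₂ q₂, IsFareyBracket a p₁ q₁ p₂ q₂ ∧ N ≤ q₂ ∧ q₂ ≤ q₁ := by
  induction N with
  | zero =>
    have hfloor : (⌊a⌋ : ℝ) < a := lt_of_le_of_ne (Int.floor_le a) (ha.ne_int _).symm
    refine ⟨⌊a⌋, 1, ⌊a⌋ + 1, 1, ⟨one_pos, one_pos, ?_, ?_, by ring⟩, zero_le_one, le_rfl⟩
    · simpa using hfloor
    · simp
  | succ N ih =>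
    obtain ⟨_, q₁, _, q₂, hB, hN, -⟩ := ih
    obtain ⟨_, Q₁, _, hQ₁, hB'⟩ := hB.exists_right_den_eq_add ha
    obtain ⟨_, _, Q₂, hQ₂, hB''⟩ := hB'.exists_left_den_eq_add ha
    have := hB.left_den_pos
    exact ⟨_, _, _, _, hB'', by omega, by omega⟩

theorem Irrational.frequently_exists_sub_pos_mul_lt_one {a : ℝ} (ha : Irrational a) :
    ∃ᶠ q : ℕ in atTop, ∃ p : ℤ, 0 < p - a * q ∧ q * (p - a * q) < 1 := by
  refine frequently_atTop.2 fun N => ?_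
  obtain ⟨_, _, p₂, q₂, hB, hN, hq⟩ := exists_isFareyBracket_le_right_den ha N
  exact ⟨q₂, hN, p₂, sub_pos.2 hB.lt_right, hB.right_den_mul_sub_lt_one hq⟩

lemma two_mul_sqrt_add_sub_sqrt_le {x c : ℝ} (hx : 0 < x) (hc : 0 ≤ c) :
    2 * (√(x + c) - √x) ≤ c / √x := by
  have hsx : 0 < √x := Real.sqrt_pos.2 hx
  have hxx : √x * √x = x := Real.mul_self_sqrt hx.le
  have hyy : √(x + c) * √(x + c) = x + c := Real.mul_self_sqrt (by linarith)
  rw [le_div_iff₀ hsx]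
  nlinarith [sq_nonneg (√x - √(x + c))]

lemma two_mul_sqrt_sub_le_sum_Ioc {c q : ℝ} (hq : 0 < q) {m n : ℤ} (hm : c < m / q) (hmn : m ≤ n) :
    2 * (√((n + 1) / q - c) - √((m + 1) / q - c)) ≤
      1 / q * ∑ k ∈ Finset.Ioc m n, (√(k / q - c))⁻¹ := by
  induction n, hmn using Int.leInduction with
  | base => simp
  | succ n hmn ih =>
    rw [← Finset.insert_Ioc_right_eq_Ioc_add_one hmn, Finset.sum_insert (by simp), mul_add]
    have hpos : 0 < (n + 1) / q - c := by
      have : (m : ℝ) ≤ n := by exact_mod_cast hmn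
      have : m / q ≤ (n + 1) / q := by gcongr; linarith
      linarith
    have hstep := two_mul_sqrt_add_sub_sqrt_le hpos (one_div_pos.2 hq).le
    have heq : (n + 1) / q - c + 1 / q = ((n + 1 : ℤ) + 1) / q - c := by push_cast; ring
    rw [heq] at hstep
    push_cast at hstep ⊢
    rw [div_eq_mul_inv (1 / q)] at hstep
    linarith

noncomputable def fullRiemannSum (a b : ℝ) (n : ℕ) : ℝ :=
  (1 / (n : ℝ)) * ∑ k ∈ (Finset.Icc ⌈a * n⌉ ⌊b * n⌋).filter
      (fun k : ℤ => a * n < (k : ℝ) ∧ (k : ℝ) < b * n),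
    (√((k : ℝ) / n - a))⁻¹

lemma le_fullRiemannSum {a b : ℝ} {q : ℕ} {p : ℤ} (hroom : 2 ≤ (b - a) * q)
    (hp : 0 < p - a * q) (hpq : q * (p - a * q) < 1) :
    2 * √(b - a) + 1 - 2 * √(2 / q) ≤ fullRiemannSum a b q := by
  have hq : (1 : ℝ) ≤ q := by
    rcases Nat.eq_zero_or_pos q with rfl | hq
    · norm_num at hroom
    · exact_mod_cast hq
  have hq₀ : (0 : ℝ) < q := by linarith
  have hp' : a < p / q := by rw [lt_div_iff₀ hq₀]; linarith
  set K := ⌈b * q⌉ - 1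
  have hK : (K : ℝ) < b * q := by push_cast [K]; linarith [Int.ceil_lt_add_one (b * q)]
  have hbK : b * q ≤ K + 1 := by push_cast [K]; linarith [Int.le_ceil (b * q)]
  have hp₁ : p - a * q < 1 := by nlinarith
  have hpK : p ≤ K := by
    have : (p : ℝ) < K + 1 := by linarith
    exact Int.lt_add_one_iff.1 (by exact_mod_cast this)
  have hsub : Finset.Icc p K ⊆ (Finset.Icc ⌈a * q⌉ ⌊b * q⌋).filter
      (fun k : ℤ => a * q < (k : ℝ) ∧ (k : ℝ) < b * q) := by
    intro k hk
    obtain ⟨hpk, hkK⟩ := Finset.mem_Icc.1 hk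
    have hpk' : (p : ℝ) ≤ k := by exact_mod_cast hpk
    have hkK' : (k : ℝ) ≤ K := by exact_mod_cast hkK
    simp only [Finset.mem_filter, Finset.mem_Icc, Int.ceil_le, Int.le_floor]
    refine ⟨⟨by linarith, by linarith⟩, by linarith, by linarith⟩
  have hfirst : 1 ≤ 1 / q * (√(p / q - a))⁻¹ := by
    have hsqrt : √(p / q - a) ≤ 1 / q := by
      refine Real.sqrt_le_iff.2 ⟨by positivity, ?_⟩
      rw [div_sub' hq₀.ne', div_pow, div_le_div_iff₀ hq₀ (by positivity)]
      nlinarith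
    rwa [← div_eq_mul_inv, one_le_div₀ (Real.sqrt_pos.2 (sub_pos.2 hp'))]
  have hrest : 2 * (√(b - a) - √(2 / q)) ≤
      1 / q * ∑ k ∈ Finset.Ioc p K, (√(k / q - a))⁻¹ := by
    refine le_trans ?_ (two_mul_sqrt_sub_le_sum_Ioc hq₀ hp' hpK)
    have hb : b - a ≤ (K + 1) / q - a := by rw [le_sub_iff_add_le, le_div_iff₀ hq₀]; nlinarith
    have hp1 : (p + 1) / q - a ≤ 2 / q := by
      rw [div_sub' hq₀.ne', div_le_div_iff_of_pos_right hq₀]; linarith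
    gcongr
  calc 2 * √(b - a) + 1 - 2 * √(2 / q)
      ≤ 1 / q * (√(p / q - a))⁻¹ + 1 / q * ∑ k ∈ Finset.Ioc p K, (√(k / q - a))⁻¹ := by
        linarith
    _ = 1 / q * ∑ k ∈ Finset.Icc p K, (√(k / q - a))⁻¹ := by
        rw [← Finset.sum_Ioc_add_eq_sum_Icc hpK]; ring
    _ ≤ fullRiemannSum a b q := by
        unfold fullRiemannSum
        gcongr

lemma le_limsup_fullRiemannSum {a b : ℝ} (ha : Irrational a) (hab : a < b) :
    ((2 * √(b - a) + 1 : ℝ) : EReal) ≤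
      limsup (fun n : ℕ => (fullRiemannSum a b n : EReal)) atTop := by
  have hlower : ∃ᶠ n : ℕ in atTop,
      ((2 * √(b - a) + 1 - 2 * √(2 / n) : ℝ) : EReal) ≤ fullRiemannSum a b n := by
    have hroom : ∀ᶠ n : ℕ in atTop, 2 ≤ (b - a) * n :=
      (tendsto_natCast_atTop_atTop.const_mul_atTop (sub_pos.2 hab)).eventually_ge_atTop 2
    refine (ha.frequently_exists_sub_pos_mul_lt_one.and_eventually hroom).mono ?_
    rintro n ⟨⟨p, hp, hpn⟩, hn⟩
    exact EReal.coe_le_coe_iff.2 (le_fullRiemannSum hn hp hpn)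
  have hbound : Tendsto (fun n : ℕ => ((2 * √(b - a) + 1 - 2 * √(2 / n) : ℝ) : EReal)) atTop
      (𝓝 ((2 * √(b - a) + 1 : ℝ) : EReal)) := by
    refine EReal.tendsto_coe.2 ?_
    simpa using tendsto_const_nhds.sub
      (((tendsto_const_div_atTop_nhds_zero_nat (2 : ℝ)).sqrt).const_mul 2)
  rw [← hbound.liminf_eq]
  exact liminf_le_limsup_of_frequently_le hlower

/-- Remark after Lemma 2: for `a` irrational and `f(x) = (x-a)^{-1/2}`, the full
equidistant Riemann sums `S_n = (1/n) ∑_{an < k < bn} (k/n - a)^{-1/2}` do not converge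
to the improper integral `2√(b-a)`; in fact `limsup S_n ≥ 2√(b-a) + 1`. -/
theorem full_riemann_sums_fail
    (a b : ℝ) (ha : Irrational a) (hab : a < b) :
    (¬ Tendsto
        (fun n : ℕ => (1 / (n : ℝ)) *
          ∑ k ∈ (Finset.Icc ⌈a * n⌉ ⌊b * n⌋).filter
              (fun k : ℤ => a * n < (k : ℝ) ∧ (k : ℝ) < b * n),
            (Real.sqrt ((k : ℝ) / n - a))⁻¹)
        atTop (nhds (2 * Real.sqrt (b - a)))) ∧
      ((2 * Real.sqrt (b - a) + 1 : ℝ) : EReal) ≤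
        Filter.limsup
          (fun n : ℕ => (((1 / (n : ℝ)) *
            ∑ k ∈ (Finset.Icc ⌈a * n⌉ ⌊b * n⌋).filter
                (fun k : ℤ => a * n < (k : ℝ) ∧ (k : ℝ) < b * n),
              (Real.sqrt ((k : ℝ) / n - a))⁻¹ : ℝ) : EReal))
          atTop := by
  have hlimsup := le_limsup_fullRiemannSum ha hab
  refine ⟨fun hlim => ?_, hlimsup⟩
  change Tendsto (fullRiemannSum a b) atTop _ at hlim
  rw [(EReal.tendsto_coe.2 hlim).limsup_eq, EReal.coe_le_coe_iff] at hlimsup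
  linarith
end

section
/- Let h be twice continuously differentiable on [0, π] with h''(t) > 0 for t ∈ (0, π), and suppose Condition (M) holds with constants c ∈ (0, π/8) and C. Then there exists a constant C' > 0, depending only on h, such that h''(t) ≤ C'·h''(ξ) in each of the following cases: (a) 0 < t < ξ < 4c; (b) π − 4c < ξ < t < π; (c) δ is any positive number less than c, 2δ < t < π − 2δ, and |ξ − t| < δ. In case (c) the constant C' does not depend on δ. -/
open MeasureTheory Filter Set
open scoped Real Topology

/-- Condition (M) for `g = h''` with explicit constants `c` and `C`. -/
def ConditionMWith (g : ℝ → ℝ) (c C : ℝ) : Prop :=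
  ∃ m₀ mπ : ℝ → ℝ,
    (∀ t ∈ Set.Ioo (0 : ℝ) (4 * c), 0 < m₀ t ∧ 0 < mπ t) ∧
    MonotoneOn m₀ (Set.Ioo (0 : ℝ) (4 * c)) ∧
    MonotoneOn mπ (Set.Ioo (0 : ℝ) (4 * c)) ∧
    (∀ t ∈ Set.Ioo (0 : ℝ) (2 * c), m₀ (2 * t) ≤ C * m₀ t ∧ mπ (2 * t) ≤ C * mπ t) ∧
    (∀ t ∈ Set.Ioo (0 : ℝ) (4 * c),
      m₀ t ≤ g t ∧ g t ≤ C * m₀ t ∧ mπ t ≤ g (π - t) ∧ g (π - t) ≤ C * mπ t)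

/-- Proposition 4: under Condition (M), `h''(t) ≤ C'·h''(ξ)` in the three cases
(a) `0 < t < ξ < 4c`; (b) `π - 4c < ξ < t < π`; (c) `0 < δ < c`, `2δ < t < π - 2δ`,
`|ξ - t| < δ` (with `C'` independent of `δ`). -/
theorem hsecond_comparison
    (h h' h'' : ℝ → ℝ)
    (hd1 : ∀ t ∈ Set.Icc (0 : ℝ) π, HasDerivWithinAt h (h' t) (Set.Icc (0 : ℝ) π) t)
    (hd2 : ∀ t ∈ Set.Icc (0 : ℝ) π, HasDerivWithinAt h' (h'' t) (Set.Icc (0 : ℝ) π) t)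
    (hcont : ContinuousOn h'' (Set.Icc (0 : ℝ) π))
    (hpos : ∀ t ∈ Set.Ioo (0 : ℝ) π, 0 < h'' t)
    (c C : ℝ) (hc : 0 < c) (hcπ : c < π / 8)
    (hM : ConditionMWith h'' c C) :
    ∃ C' > (0 : ℝ),
      (∀ t ξ : ℝ, 0 < t → t < ξ → ξ < 4 * c → h'' t ≤ C' * h'' ξ) ∧
      (∀ t ξ : ℝ, π - 4 * c < ξ → ξ < t → t < π → h'' t ≤ C' * h'' ξ) ∧
      (∀ δ t ξ : ℝ, 0 < δ → δ < c → 2 * δ < t → t < π - 2 * δ → |ξ - t| < δ →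
        h'' t ≤ C' * h'' ξ) := by
  clear hd1 hd2
  obtain ⟨m₀, mπ, hmpos, hm₀mono, hmπmono, hdbl, hbound⟩ := hM
  have hπ : (0:ℝ) < π := Real.pi_pos
  have hc4 : 4 * c < π / 2 := by linarith
  -- C ≥ 1
  have hC1 : 1 ≤ C := by
    have ht : (2*c) ∈ Set.Ioo (0:ℝ) (4*c) := by constructor <;> linarith
    have h1 := (hmpos _ ht).1
    have h2 := (hbound _ ht).1
    have h3 := (hbound _ ht).2.1
    nlinarith
  have hC0 : 0 ≤ C := by linarith
  -- min and max of h'' on [c, π - c]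
  have hsub : Set.Icc c (π - c) ⊆ Set.Icc 0 π :=
    Set.Icc_subset_Icc hc.le (by linarith)
  have hne : (Set.Icc c (π - c)).Nonempty := ⟨c, by constructor <;> linarith⟩
  obtain ⟨a, haI, hamin⟩ := isCompact_Icc.exists_isMinOn hne (hcont.mono hsub)
  obtain ⟨b, hbI, hbmax⟩ := isCompact_Icc.exists_isMaxOn hne (hcont.mono hsub)
  have hapos : 0 < h'' a :=
    hpos a ⟨lt_of_lt_of_le hc haI.1, lt_of_le_of_lt haI.2 (by linarith)⟩
  have hbpos : 0 < h'' b := lt_of_lt_of_le hapos (hbmax haI)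
  set K := h'' b / h'' a with hKdef
  set C' := max (C * C) K with hC'def
  have hCC : C ≤ C * C := by nlinarith
  have hCmax : C ≤ C' := hCC.trans (le_max_left _ _)
  have hCCmax : C * C ≤ C' := le_max_left _ _
  have hKmax : K ≤ C' := le_max_right _ _
  have final : ∀ u v A : ℝ, h'' u ≤ A * h'' v → A ≤ C' → 0 ≤ h'' v →
      h'' u ≤ C' * h'' v := by
    intro u v A h1 h2 h3
    exact h1.trans (mul_le_mul_of_nonneg_right h2 h3)
  have hKratio : ∀ x y, x ∈ Set.Icc c (π - c) → y ∈ Set.Icc c (π - c) →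
      h'' x ≤ K * h'' y := by
    intro x y hx hy
    have h1 : h'' x ≤ h'' b := hbmax hx
    have h2 : h'' a ≤ h'' y := hamin hy
    rw [hKdef, div_mul_eq_mul_div, le_div_iff₀ hapos]
    nlinarith
  refine ⟨C', lt_of_lt_of_le (by nlinarith) hCCmax, ?_, ?_, ?_⟩
  · -- case (a)
    intro t ξ ht htξ hξ
    have htI : t ∈ Set.Ioo (0:ℝ) (4*c) := ⟨ht, by linarith⟩
    have hξI : ξ ∈ Set.Ioo (0:ℝ) (4*c) := ⟨by linarith, hξ⟩
    have hξpos : 0 < h'' ξ := hpos ξ ⟨by linarith, by linarith⟩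
    have e1 : h'' t ≤ C * m₀ t := (hbound _ htI).2.1
    have e2 : m₀ t ≤ m₀ ξ := hm₀mono htI hξI htξ.le
    have e3 : m₀ ξ ≤ h'' ξ := (hbound _ hξI).1
    exact final t ξ C
      (e1.trans (mul_le_mul_of_nonneg_left (e2.trans e3) hC0)) hCmax hξpos.le
  · -- case (b)
    intro t ξ hξ hξt ht
    have htI : (π - t) ∈ Set.Ioo (0:ℝ) (4*c) := ⟨by linarith, by linarith⟩
    have hξI : (π - ξ) ∈ Set.Ioo (0:ℝ) (4*c) := ⟨by linarith, by linarith⟩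
    have hξpos : 0 < h'' ξ := hpos ξ ⟨by linarith, by linarith⟩
    have e1 : h'' (π - (π - t)) ≤ C * mπ (π - t) := (hbound _ htI).2.2.2
    rw [show π - (π - t) = t by ring] at e1
    have e2 : mπ (π - t) ≤ mπ (π - ξ) := hmπmono htI hξI (by linarith)
    have e3 : mπ (π - ξ) ≤ h'' (π - (π - ξ)) := (hbound _ hξI).2.2.1
    rw [show π - (π - ξ) = ξ by ring] at e3
    exact final t ξ C
      (e1.trans (mul_le_mul_of_nonneg_left (e2.trans e3) hC0)) hCmax hξpos.le
  · -- case (c)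
    intro δ t ξ hδ hδc hδt htδ hξt
    rw [abs_lt] at hξt
    obtain ⟨hξt1, hξt2⟩ := hξt
    rcases le_or_gt t (2*c) with h2c | h2c
    · -- t near 0
      have hξpos' : 0 < ξ := by linarith
      have hξ4c : ξ < 4 * c := by linarith
      have hξI : ξ ∈ Set.Ioo (0:ℝ) (4*c) := ⟨hξpos', hξ4c⟩
      have htI : t ∈ Set.Ioo (0:ℝ) (4*c) := ⟨by linarith, by linarith⟩
      have hξpos : 0 < h'' ξ := hpos ξ ⟨hξpos', by linarith⟩
      have e1 : h'' t ≤ C * m₀ t := (hbound _ htI).2.1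
      have e3 : m₀ ξ ≤ h'' ξ := (hbound _ hξI).1
      rcases le_or_gt t ξ with htξ | htξ
      · have e2 : m₀ t ≤ m₀ ξ := hm₀mono htI hξI htξ
        exact final t ξ C
          (e1.trans (mul_le_mul_of_nonneg_left (e2.trans e3) hC0)) hCmax hξpos.le
      · have hξ2c : ξ ∈ Set.Ioo (0:ℝ) (2*c) := ⟨hξpos', by linarith⟩
        have h2ξI : (2*ξ) ∈ Set.Ioo (0:ℝ) (4*c) := ⟨by linarith, by linarith⟩
        have e2 : m₀ t ≤ m₀ (2*ξ) := hm₀mono htI h2ξI (by linarith)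
        have e4 : m₀ (2*ξ) ≤ C * m₀ ξ := (hdbl _ hξ2c).1
        have e5 : m₀ t ≤ C * h'' ξ :=
          (e2.trans e4).trans (mul_le_mul_of_nonneg_left e3 hC0)
        have e6 : h'' t ≤ C * C * h'' ξ := by
          calc h'' t ≤ C * m₀ t := e1
            _ ≤ C * (C * h'' ξ) := mul_le_mul_of_nonneg_left e5 hC0
            _ = C * C * h'' ξ := by ring
        exact final t ξ (C * C) e6 hCCmax hξpos.le
    rcases le_or_gt (π - 2*c) t with h2c' | h2c'
    · -- t near π
      have hξltπ : ξ < π := by linarith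
      have hξI : (π - ξ) ∈ Set.Ioo (0:ℝ) (4*c) := ⟨by linarith, by linarith⟩
      have htI : (π - t) ∈ Set.Ioo (0:ℝ) (4*c) := ⟨by linarith, by linarith⟩
      have hξpos : 0 < h'' ξ := hpos ξ ⟨by linarith, hξltπ⟩
      have e1 : h'' (π - (π - t)) ≤ C * mπ (π - t) := (hbound _ htI).2.2.2
      rw [show π - (π - t) = t by ring] at e1
      have e3 : mπ (π - ξ) ≤ h'' (π - (π - ξ)) := (hbound _ hξI).2.2.1
      rw [show π - (π - ξ) = ξ by ring] at e3
      rcases le_or_gt ξ t with hξle | hξle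
      · have e2 : mπ (π - t) ≤ mπ (π - ξ) := hmπmono htI hξI (by linarith)
        exact final t ξ C
          (e1.trans (mul_le_mul_of_nonneg_left (e2.trans e3) hC0)) hCmax hξpos.le
      · have hu2c : (π - ξ) ∈ Set.Ioo (0:ℝ) (2*c) := ⟨by linarith, by linarith⟩
        have h2uI : (2*(π - ξ)) ∈ Set.Ioo (0:ℝ) (4*c) := ⟨by linarith, by linarith⟩
        have e2 : mπ (π - t) ≤ mπ (2*(π - ξ)) := hmπmono htI h2uI (by linarith)
        have e4 : mπ (2*(π - ξ)) ≤ C * mπ (π - ξ) := (hdbl _ hu2c).2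
        have e5 : mπ (π - t) ≤ C * h'' ξ :=
          (e2.trans e4).trans (mul_le_mul_of_nonneg_left e3 hC0)
        have e6 : h'' t ≤ C * C * h'' ξ := by
          calc h'' t ≤ C * mπ (π - t) := e1
            _ ≤ C * (C * h'' ξ) := mul_le_mul_of_nonneg_left e5 hC0
            _ = C * C * h'' ξ := by ring
        exact final t ξ (C * C) e6 hCCmax hξpos.le
    · -- middle
      have htI : t ∈ Set.Icc c (π - c) := ⟨by linarith, by linarith⟩
      have hξI : ξ ∈ Set.Icc c (π - c) := ⟨by linarith, by linarith⟩
      have hξpos : 0 < h'' ξ := hpos ξ ⟨by linarith, by linarith⟩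
      exact final t ξ K (hKratio t ξ htI hξI) hKmax hξpos.le
end

section
/- Let h : ℝ → ℝ be twice continuously differentiable and odd, with h(t + 2π) = h(t) + 2kπ for some integer k, with h''(t) > 0 for t ∈ (0, π), and satisfying Condition (M) with constants c ∈ (0, π/8) and C. Let ω(δ) = sup{ |h''(x) − h''(y)| : x, y ∈ [0, π], |x − y| < δ } be the modulus of continuity of h'' on [0, π], and a_{n,ν} = (1/(2π)) ∫_{−π}^{π} exp(i(n h(t) − ν t)) dt. Then there exists C' > 0 such that for every positive integer n and every δ ∈ (0, c): Σ_{ν ∈ ℤ : n h'(0) + 1 < ν < n h'(2δ)} |a_{n,ν}| ≤ C'·(1 + n δ² ω(δ)), and likewise Σ_{ν ∈ ℤ : n h'(π − 2δ) < ν < n h'(π) − 1} |a_{n,ν}| ≤ C'·(1 + n δ² ω(δ)). -/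
/-!
Since `h` is odd, `a_{n,ν} = π⁻¹ Re ∫₀^π exp(i(n h(t) - ν t)) dt`, and the substitution
`t ↦ π - t` turns the sum near `π` into a sum near `0` for the phase `h(π - ·)` (still convex on
`[0, π]`) and the frequencies `-ν`. So let `S` be a set of frequencies `ν ≤ n g'(2δ)` for a phase
`g` that is convex on `[0, π]` and satisfies Condition (M) at `0` with weight `m`. On `[3δ, π]`
the derivative of `n g(t) - ν t` is at least `n δ m(2δ)`, so van der Corput's first-derivative
test bounds that part of the integral by `4 / (n δ m(2δ))`. The integrals over `[0, 3δ]` are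
Fourier coefficients of a unimodular function restricted to an interval of length `3δ`, so by
Bessel's inequality and Cauchy–Schwarz their sum is at most `√(#S · 6πδ)`. Finally
`#S ≤ n (g'(2δ) - g'(0))`, which is at most `6 n δ ω(δ)` because `g''(0) = 0`, and at most
`2 n δ C m(2δ)`.
-/

open MeasureTheory Filter Set intervalIntegral
open scoped Real Topology Classical

section Calculus

theorem deriv_neg_of_odd {f : ℝ → ℝ} (hf : ∀ t, f (-t) = -f t) (t : ℝ) :
    deriv f (-t) = deriv f t := by
  have h := deriv_comp_neg f (x := t)
  rw [funext hf, deriv.fun_neg] at h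
  linarith

theorem deriv_neg_of_even {f : ℝ → ℝ} (hf : ∀ t, f (-t) = f t) (t : ℝ) :
    deriv f (-t) = -deriv f t := by
  have h := deriv_comp_neg f (x := t)
  rw [funext hf] at h
  linarith

theorem deriv_add_of_add_const {f : ℝ → ℝ} {T b : ℝ} (hf : ∀ t, f (t + T) = f t + b) (t : ℝ) :
    deriv f (t + T) = deriv f t := by
  have h := deriv_comp_add_const (f := f) (a := T) (x := t)
  rw [funext hf, deriv_add_const] at h
  exact h.symm

theorem deriv_deriv_eq_zero_of_odd_of_add_const {f : ℝ → ℝ} (hodd : ∀ t, f (-t) = -f t) {a b : ℝ}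
    (hper : ∀ t, f (t + 2 * a) = f t + b) : deriv (deriv f) a = 0 := by
  have hper' : ∀ t, deriv (deriv f) (t + 2 * a) = deriv (deriv f) t :=
    deriv_add_of_add_const fun t => by rw [deriv_add_of_add_const hper, add_zero]
  have h := hper' (-a)
  rw [deriv_neg_of_even (deriv_neg_of_odd hodd), show -a + 2 * a = a by ring] at h
  linarith

theorem deriv_deriv_zero_of_odd {f : ℝ → ℝ} (hodd : ∀ t, f (-t) = -f t) :
    deriv (deriv f) 0 = 0 :=
  deriv_deriv_eq_zero_of_odd_of_add_const hodd (b := 0) (by simp)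

theorem deriv_deriv_nonneg_of_odd_of_add_const {f : ℝ → ℝ} (hodd : ∀ t, f (-t) = -f t)
    {a b : ℝ} (hper : ∀ t, f (t + 2 * a) = f t + b) (hpos : ∀ t ∈ Ioo 0 a, 0 < deriv (deriv f) t) :
    ∀ t ∈ Icc 0 a, 0 ≤ deriv (deriv f) t := by
  rintro t ⟨h0, ha⟩
  rcases h0.eq_or_lt with rfl | h0
  · exact (deriv_deriv_zero_of_odd hodd).ge
  rcases ha.eq_or_lt with rfl | ha
  · exact (deriv_deriv_eq_zero_of_odd_of_add_const hodd hper).ge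
  exact (hpos t ⟨h0, ha⟩).le

theorem deriv_deriv_comp_const_sub (f : ℝ → ℝ) (a x : ℝ) :
    deriv (deriv fun s => f (a - s)) x = deriv (deriv f) (a - x) := by
  rw [funext (deriv_comp_const_sub f a), deriv.fun_neg, deriv_comp_const_sub, neg_neg]

theorem abs_sub_le_sSup_modulus {g : ℝ → ℝ} {a b : ℝ} (hg : ContinuousOn g (Icc a b)) (δ : ℝ)
    {x y : ℝ} (hx : x ∈ Icc a b) (hy : y ∈ Icc a b) (hxy : |x - y| < δ) :
    |g x - g y| ≤ sSup {v : ℝ | ∃ x ∈ Icc a b, ∃ y ∈ Icc a b, |x - y| < δ ∧ v = |g x - g y|} := by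
  obtain ⟨M, hM⟩ := isCompact_Icc.exists_bound_of_continuousOn hg
  refine le_csSup ⟨2 * M, ?_⟩ ⟨x, hx, y, hy, hxy, rfl⟩
  rintro _ ⟨x, hx, y, hy, -, rfl⟩
  have hbound := add_le_add (hM x hx) (hM y hy)
  rw [Real.norm_eq_abs, Real.norm_eq_abs] at hbound
  linarith [abs_sub (g x) (g y)]

theorem abs_sub_le_three_mul_of_modulus {g : ℝ → ℝ} {s : Set ℝ} (hs : Convex ℝ s) {δ w : ℝ}
    (hw : ∀ x ∈ s, ∀ y ∈ s, |x - y| < δ → |g x - g y| ≤ w) {x y : ℝ} (hx : x ∈ s) (hy : y ∈ s)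
    (hxy : |x - y| < 3 * δ) : |g x - g y| ≤ 3 * w := by
  have hmem : ∀ k ∈ Icc (0 : ℝ) 1, x + k * (y - x) ∈ s := fun k hk => hs.add_smul_sub_mem hx hy hk
  have hstep : ∀ k ∈ Icc (0 : ℝ) 1, ∀ l ∈ Icc (0 : ℝ) 1, |k - l| = 1 / 3 →
      |g (x + k * (y - x)) - g (x + l * (y - x))| ≤ w := fun k hk l hl hkl =>
    hw _ (hmem k hk) _ (hmem l hl) (by
      rw [show x + k * (y - x) - (x + l * (y - x)) = (k - l) * -(x - y) by ring, abs_mul, abs_neg,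
        hkl]
      linarith)
  have h1 := hstep 0 (by norm_num) (1 / 3) (by norm_num) (by norm_num [abs_of_neg])
  have h2 := hstep (1 / 3) (by norm_num) (2 / 3) (by norm_num) (by norm_num [abs_of_neg])
  have h3 := hstep (2 / 3) (by norm_num) 1 (by norm_num) (by norm_num [abs_of_neg])
  simp only [zero_mul, add_zero, one_mul, add_sub_cancel] at h1 h3
  linarith [abs_sub_le (g x) (g (x + 1 / 3 * (y - x))) (g (x + 2 / 3 * (y - x))),
    abs_sub_le (g x) (g (x + 2 / 3 * (y - x))) (g y)]

end Calculus

section Counting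

theorem card_le_of_forall_mem_Icc {S : Finset ℤ} {x y : ℝ} (hxy : x ≤ y + 1)
    (hS : ∀ ν ∈ S, x ≤ ν ∧ (ν : ℝ) ≤ y) : (S.card : ℝ) ≤ y - x + 1 := by
  have hsub : S ⊆ Finset.Icc ⌈x⌉ ⌊y⌋ := fun ν hν =>
    Finset.mem_Icc.mpr ⟨Int.ceil_le.mpr (hS ν hν).1, Int.le_floor.mpr (hS ν hν).2⟩
  have hcard : ((Finset.Icc ⌈x⌉ ⌊y⌋).card : ℝ) = max ((⌊y⌋ + 1 - ⌈x⌉ : ℤ) : ℝ) 0 := by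
    rw [Int.card_Icc, ← Int.cast_natCast, Int.toNat_eq_max]
    push_cast
    rfl
  calc (S.card : ℝ) ≤ (Finset.Icc ⌈x⌉ ⌊y⌋).card := by exact_mod_cast Finset.card_le_card hsub
    _ ≤ y - x + 1 := by
      rw [hcard]
      push_cast
      exact max_le (by linarith [Int.le_ceil x, Int.floor_le y]) (by linarith)

theorem card_le_of_deriv_le {f : ℝ → ℝ} (hf : Differentiable ℝ f) {a b N B : ℝ} (hab : a ≤ b)
    (hN : 0 ≤ N) (hf'_nonneg : ∀ t ∈ Icc a b, 0 ≤ deriv f t) (hf'_le : ∀ t ∈ Icc a b, deriv f t ≤ B)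
    {S : Finset ℤ} (hS : ∀ ν ∈ S, N * f a + 1 < ν ∧ (ν : ℝ) < N * f b) :
    (S.card : ℝ) ≤ N * (B * (b - a)) := by
  have hincr : 0 * (b - a) ≤ f b - f a :=
    (convex_Icc a b).mul_sub_le_image_sub_of_le_deriv hf.continuous.continuousOn
      hf.differentiableOn (fun t ht => hf'_nonneg t (interior_subset ht)) a (left_mem_Icc.mpr hab)
      b (right_mem_Icc.mpr hab) hab
  have hgrowth : f b - f a ≤ B * (b - a) :=
    (convex_Icc a b).image_sub_le_mul_sub_of_deriv_le hf.continuous.continuousOn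
      hf.differentiableOn (fun t ht => hf'_le t (interior_subset ht)) a (left_mem_Icc.mpr hab)
      b (right_mem_Icc.mpr hab) hab
  have hN_mono := mul_le_mul_of_nonneg_left (by linarith : f a ≤ f b) hN
  have hcard := card_le_of_forall_mem_Icc (by linarith) fun ν hν => ⟨(hS ν hν).1.le, (hS ν hν).2.le⟩
  linarith [mul_le_mul_of_nonneg_left hgrowth hN]

theorem Finset.sum_le_sqrt_card_mul_add {ι : Type*} (S : Finset ι) {x y : ι → ℝ} {B T : ℝ}
    (hxy : ∀ i ∈ S, x i ≤ y i + T) (hy : ∀ i ∈ S, 0 ≤ y i) (hB : ∑ i ∈ S, y i ^ 2 ≤ B) :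
    ∑ i ∈ S, x i ≤ √(S.card * B) + S.card * T := by
  have hCS : ∑ i ∈ S, y i ≤ √(S.card * B) := by
    have hB0 : 0 ≤ B := (Finset.sum_nonneg fun i _ => sq_nonneg (y i)).trans hB
    rw [Real.le_sqrt (Finset.sum_nonneg hy) (by positivity)]
    exact sq_sum_le_card_mul_sum_sq.trans (by gcongr)
  calc ∑ i ∈ S, x i ≤ ∑ i ∈ S, (y i + T) := Finset.sum_le_sum hxy
    _ = ∑ i ∈ S, y i + S.card * T := by rw [Finset.sum_add_distrib, Finset.sum_const, nsmul_eq_mul]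
    _ ≤ √(S.card * B) + S.card * T := by gcongr

end Counting

section Oscillatory

open Complex
open scoped ComplexConjugate

theorem hasDerivAt_exp_I_mul_div_deriv {φ φ' : ℝ → ℝ} {t φ''t : ℝ}
    (hφ : HasDerivAt φ (φ' t) t) (hφ' : HasDerivAt φ' φ''t t) (hne : φ' t ≠ 0) :
    HasDerivAt (fun s => -I * exp (I * φ s) * ((φ' s)⁻¹ : ℝ))
      (exp (I * φ t) + I * exp (I * φ t) * ((φ''t / φ' t ^ 2 : ℝ) : ℂ)) t := by
  have he : HasDerivAt (fun s => exp (I * φ s)) (I * φ' t * exp (I * φ t)) t := by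
    simpa [mul_comm, mul_left_comm] using (hφ.ofReal_comp.const_mul I).cexp
  refine ((he.const_mul (-I)).mul (hφ'.inv hne).ofReal_comp).congr_deriv ?_
  have : (φ' t : ℂ) ≠ 0 := by exact_mod_cast hne
  simp only [Pi.inv_apply]
  push_cast
  field_simp
  ring_nf
  rw [I_sq]
  ring

theorem norm_integral_exp_I_mul_le_of_le_abs_deriv {φ φ' φ'' : ℝ → ℝ} {a b G : ℝ} (hab : a ≤ b)
    (hG : 0 < G) (hφ : ∀ t ∈ Icc a b, HasDerivAt φ (φ' t) t)
    (hφ' : ∀ t ∈ Icc a b, HasDerivAt φ' (φ'' t) t) (hφ''_cont : ContinuousOn φ'' (Icc a b))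
    (hφ''_nonneg : ∀ t ∈ Icc a b, 0 ≤ φ'' t) (hG_le : ∀ t ∈ Icc a b, G ≤ |φ' t|) :
    ‖∫ t in a..b, exp (I * φ t)‖ ≤ 4 / G := by
  rw [← uIcc_of_le hab] at hφ hφ' hφ''_cont hφ''_nonneg hG_le
  have hne : ∀ t ∈ uIcc a b, φ' t ≠ 0 := fun t ht h0 => by
    have := hG_le t ht
    rw [h0, abs_zero] at this
    linarith
  have hinv_le : ∀ t ∈ uIcc a b, |(φ' t)⁻¹| ≤ 1 / G := fun t ht => by
    rw [abs_inv, one_div]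
    exact inv_anti₀ hG (hG_le t ht)
  have hρ_cont : ContinuousOn (fun t => φ'' t / φ' t ^ 2) (uIcc a b) :=
    hφ''_cont.div ((show ContinuousOn φ' (uIcc a b) from
      fun t ht => (hφ' t ht).continuousAt.continuousWithinAt).pow 2)
      fun t ht => pow_ne_zero 2 (hne t ht)
  have hφ_cont : ContinuousOn φ (uIcc a b) := fun t ht => (hφ t ht).continuousAt.continuousWithinAt
  set e : ℝ → ℂ := fun t => exp (I * φ t)
  set r : ℝ → ℂ := fun t => I * e t * ((φ'' t / φ' t ^ 2 : ℝ) : ℂ)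
  set u : ℝ → ℂ := fun t => -I * e t * (((φ' t)⁻¹ : ℝ) : ℂ)
  have hcont_e : ContinuousOn e (uIcc a b) := by fun_prop
  have hcont_r : ContinuousOn r (uIcc a b) := by fun_prop
  have hparts : ∫ t in a..b, e t = u b - u a - ∫ t in a..b, r t := by
    rw [← integral_eq_sub_of_hasDerivAt
      (fun t ht => hasDerivAt_exp_I_mul_div_deriv (hφ t ht) (hφ' t ht) (hne t ht))
      ((hcont_e.add hcont_r).intervalIntegrable),
      integral_add hcont_e.intervalIntegrable hcont_r.intervalIntegrable]
    ring
  have hnorm_u : ∀ t ∈ uIcc a b, ‖u t‖ ≤ 1 / G := fun t ht => by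
    simpa [u, e, norm_exp] using hinv_le t ht
  have hnorm_r : ‖∫ t in a..b, r t‖ ≤ 2 / G := by
    have hr : ∀ t ∈ uIcc a b, ‖r t‖ = φ'' t / φ' t ^ 2 := fun t ht => by
      simp [r, e, norm_exp, abs_of_nonneg (hφ''_nonneg t ht)]
    have hftc : ∫ t in a..b, φ'' t / φ' t ^ 2 = (φ' a)⁻¹ - (φ' b)⁻¹ := by
      rw [integral_eq_sub_of_hasDerivAt (f := fun t => -(φ' t)⁻¹)
        (fun t ht => ((hφ' t ht).inv (hne t ht)).neg.congr_deriv (by ring))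
        hρ_cont.intervalIntegrable]
      ring
    calc ‖∫ t in a..b, r t‖ ≤ ∫ t in a..b, ‖r t‖ := norm_integral_le_integral_norm hab
      _ = (φ' a)⁻¹ - (φ' b)⁻¹ := by rw [integral_congr hr, hftc]
      _ ≤ 1 / G + 1 / G := by
        linarith [le_abs_self (φ' a)⁻¹, neg_abs_le (φ' b)⁻¹, hinv_le a left_mem_uIcc,
          hinv_le b right_mem_uIcc]
      _ = 2 / G := by ring
  calc ‖∫ t in a..b, e t‖ ≤ ‖u b‖ + ‖u a‖ + ‖∫ t in a..b, r t‖ := by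
        rw [hparts]; exact (norm_sub_le _ _).trans (by gcongr; exact norm_sub_le _ _)
    _ ≤ 1 / G + 1 / G + 2 / G := by
        gcongr
        exacts [hnorm_u b right_mem_uIcc, hnorm_u a left_mem_uIcc]
    _ = 4 / G := by ring

theorem intervalIntegral_indicator_Ioc {E : Type*} [NormedAddCommGroup E] [NormedSpace ℝ E]
    {p q r : ℝ} (hpq : p ≤ q) (hqr : q ≤ r) (g : ℝ → E) :
    ∫ t in p..r, (Ioc p q).indicator g t = ∫ t in p..q, g t := by
  rw [integral_of_le (hpq.trans hqr), integral_of_le hpq, setIntegral_indicator measurableSet_Ioc,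
    inter_eq_right.mpr (Ioc_subset_Ioc_right hqr)]

theorem sum_sq_norm_integral_mul_exp_le {F : ℝ → ℂ} {p q : ℝ} (hpq : p ≤ q) (hq : q ≤ p + 2 * π)
    (hF : MemLp F 2 (volume.restrict (Ioc p q))) (S : Finset ℤ) :
    ∑ ν ∈ S, ‖∫ t in p..q, F t * exp (-(I * ν * t))‖ ^ 2 ≤ 2 * π * ∫ t in p..q, ‖F t‖ ^ 2 := by
  have hT : p < p + 2 * π := by linarith [Real.pi_pos]
  -- Parseval for `F` cut off to `(p, q]`, viewed on the period `(p, p + 2π]`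
  set f := (Ioc p q).indicator F
  have hf : MemLp f 2 (volume.restrict (Ioc p (p + 2 * π))) := by
    rwa [memLp_indicator_iff_restrict measurableSet_Ioc,
      Measure.restrict_restrict measurableSet_Ioc, inter_eq_left.mpr (Ioc_subset_Ioc_right hq)]
  have hcoeff : ∀ ν : ℤ, fourierCoeffOn hT f ν =
      (1 / (2 * π) : ℝ) • ∫ t in p..q, F t * exp (-(I * ν * t)) := by
    intro ν
    rw [fourierCoeffOn_eq_integral, ← intervalIntegral_indicator_Ioc hpq hq]
    simp only [add_sub_cancel_left, fourier_coe_apply, f]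
    congr 2
    ext t
    by_cases ht : t ∈ Ioc p q
    · simp only [indicator_of_mem ht, smul_eq_mul, mul_comm (F t)]
      congr 2
      push_cast
      field_simp
    · simp [indicator_of_notMem ht]
  have hnorm : ∫ t in p..p + 2 * π, ‖f t‖ ^ 2 = ∫ t in p..q, ‖F t‖ ^ 2 := by
    rw [← intervalIntegral_indicator_Ioc hpq hq]
    congr 1
    ext t
    by_cases ht : t ∈ Ioc p q <;> simp [f, ht]
  have hbessel := sum_le_hasSum S (fun _ _ => by positivity) (hasSum_sq_fourierCoeffOn hT hf)
  simp only [hcoeff, norm_smul, mul_pow, ← Finset.mul_sum, add_sub_cancel_left, hnorm,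
    smul_eq_mul] at hbessel
  rw [Real.norm_of_nonneg (by positivity), div_pow, one_pow,
    ← le_div_iff₀' (by positivity)] at hbessel
  refine hbessel.trans_eq ?_
  field_simp

noncomputable def expPhase (N : ℝ) (g : ℝ → ℝ) (ν : ℤ) (t : ℝ) : ℂ :=
  exp (I * (N * g t - ν * t))

theorem continuous_expPhase {g : ℝ → ℝ} (hg : Continuous g) (N : ℝ) (ν : ℤ) :
    Continuous (expPhase N g ν) := by
  unfold expPhase; fun_prop

theorem expPhase_neg {g : ℝ → ℝ} (hg : ∀ t, g (-t) = -g t) (N : ℝ) (ν : ℤ) (t : ℝ) :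
    expPhase N g ν (-t) = conj (expPhase N g ν t) := by
  simp only [expPhase, ← exp_conj, hg, map_mul, map_sub, conj_I, conj_ofReal, map_intCast]
  push_cast
  ring_nf

theorem norm_integral_expPhase_symm_le {g : ℝ → ℝ} (hg : Continuous g)
    (hodd : ∀ t, g (-t) = -g t) (N : ℝ) (ν : ℤ) (a : ℝ) :
    ‖∫ t in -a..a, expPhase N g ν t‖ ≤ 2 * ‖∫ t in 0..a, expPhase N g ν t‖ := by
  have hint := (continuous_expPhase hg N ν).intervalIntegrable (μ := volume)
  have hneg : ∫ t in -a..0, expPhase N g ν t = conj (∫ t in 0..a, expPhase N g ν t) := by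
    rw [← neg_zero, ← integral_comp_neg, neg_zero]
    simp only [expPhase_neg hodd, intervalIntegral_conj]
  rw [← integral_add_adjacent_intervals (hint _ _) (hint _ _), hneg]
  calc _ ≤ ‖conj (∫ t in 0..a, expPhase N g ν t)‖ + ‖∫ t in 0..a, expPhase N g ν t‖ :=
        norm_add_le _ _
    _ = _ := by rw [RCLike.norm_conj]; ring

theorem norm_integral_expPhase_comp_sub (N : ℝ) (g : ℝ → ℝ) (ν : ℤ) (a : ℝ) :
    ‖∫ t in 0..a, expPhase N g ν t‖ = ‖∫ s in 0..a, expPhase N (fun s => g (a - s)) (-ν) s‖ := by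
  have hsub := integral_comp_sub_left (expPhase N g ν) a (a := 0) (b := a)
  rw [sub_self, sub_zero] at hsub
  have hphase : ∀ s, expPhase N g ν (a - s) =
      exp (-(I * ν * a)) * expPhase N (fun s => g (a - s)) (-ν) s := fun s => by
    simp only [expPhase, ← exp_add]
    push_cast
    ring_nf
  rw [← hsub, integral_congr fun s _ => hphase s, intervalIntegral.integral_const_mul, norm_mul]
  simp [norm_exp]

theorem sum_sq_norm_integral_expPhase_le {g : ℝ → ℝ} (hg : Continuous g) (N : ℝ) {p q : ℝ}
    (hpq : p ≤ q) (hq : q ≤ p + 2 * π) (S : Finset ℤ) :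
    ∑ ν ∈ S, ‖∫ t in p..q, expPhase N g ν t‖ ^ 2 ≤ 2 * π * (q - p) := by
  set F : ℝ → ℂ := fun t => exp (I * (N * g t))
  have hF : MemLp F 2 (volume.restrict (Ioc p q)) :=
    MemLp.of_bound (by fun_prop : Continuous F).aestronglyMeasurable 1
      (ae_of_all _ fun t => by simp [F, norm_exp])
  have hsplit : ∀ ν : ℤ, expPhase N g ν = fun t => F t * exp (-(I * ν * t)) := fun ν => by
    ext t
    rw [expPhase, ← exp_add]
    ring_nf
  have hnorm : ∫ t in p..q, ‖F t‖ ^ 2 = q - p := by simp [F, norm_exp]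
  simpa only [hsplit, hnorm] using sum_sq_norm_integral_mul_exp_le hpq hq hF S

theorem norm_integral_expPhase_le_window_add {g : ℝ → ℝ} (hg : ContDiff ℝ 2 g)
    (hconv : ∀ t ∈ Icc 0 π, 0 ≤ deriv (deriv g) t) {δ m N : ℝ} (hδ : 0 < δ) (h3δ : 3 * δ ≤ π)
    (hm : 0 < m) (hm_le : ∀ t ∈ Icc (2 * δ) (3 * δ), m ≤ deriv (deriv g) t) (hN : 0 < N)
    {ν : ℤ} (hν : (ν : ℝ) ≤ N * deriv g (2 * δ)) :
    ‖∫ t in 0..π, expPhase N g ν t‖ ≤ ‖∫ t in 0..3 * δ, expPhase N g ν t‖ + 4 / (N * δ * m) := by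
  have hg' : ContDiff ℝ 1 (deriv g) := hg.deriv'
  have hd1 : Differentiable ℝ g := hg.differentiable (by norm_num)
  have hd2 : Differentiable ℝ (deriv g) := hg'.differentiable one_ne_zero
  have hmono : MonotoneOn (deriv g) (Icc 0 π) :=
    monotoneOn_of_deriv_nonneg (convex_Icc 0 π) hd2.continuous.continuousOn hd2.differentiableOn
      fun t ht => hconv t (interior_subset ht)
  have hgap : m * (3 * δ - 2 * δ) ≤ deriv g (3 * δ) - deriv g (2 * δ) :=
    (convex_Icc _ _).mul_sub_le_image_sub_of_le_deriv hd2.continuous.continuousOn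
      hd2.differentiableOn (fun t ht => hm_le t (interior_subset ht)) _
      (left_mem_Icc.mpr (by linarith)) _ (right_mem_Icc.mpr (by linarith)) (by linarith)
  have hG : ∀ t ∈ Icc (3 * δ) π, N * δ * m ≤ |N * deriv g t - ν| := fun t ht => by
    have h3 : deriv g (3 * δ) ≤ deriv g t :=
      hmono ⟨by linarith, h3δ⟩ ⟨by linarith [ht.1], ht.2⟩ ht.1
    refine le_abs.mpr (Or.inl ?_)
    nlinarith
  have htail : ‖∫ t in 3 * δ..π, expPhase N g ν t‖ ≤ 4 / (N * δ * m) := by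
    have hphase : ∀ t, expPhase N g ν t = exp (I * ((N * g t - ν * t : ℝ) : ℂ)) := fun t => by
      simp [expPhase]
    simp only [hphase]
    refine norm_integral_exp_I_mul_le_of_le_abs_deriv h3δ (by positivity)
      (φ' := fun t => N * deriv g t - ν) (φ'' := fun t => N * deriv (deriv g) t)
      (fun t _ => ?_) (fun t _ => ?_) ?_ (fun t ht => ?_) hG
    · exact (((hd1 t).hasDerivAt.const_mul N).sub
        ((hasDerivAt_id t).const_mul (ν : ℝ))).congr_deriv (by simp)
    · exact ((hd2 t).hasDerivAt.const_mul N).sub_const _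
    · exact ((hg'.continuous_deriv le_rfl).const_mul N).continuousOn
    · exact mul_nonneg hN.le (hconv t ⟨by linarith [ht.1], ht.2⟩)
  have hint := (continuous_expPhase hd1.continuous N ν).intervalIntegrable (μ := volume)
  rw [← integral_add_adjacent_intervals (hint 0 (3 * δ)) (hint _ π)]
  exact (norm_add_le _ _).trans (by gcongr)

theorem sqrt_mul_add_mul_div_le_of_le {k N δ w K μ : ℝ} (hN : 0 < N) (hδ : 0 < δ) (hμ : 0 < μ)
    (hw : 0 ≤ w) (hK : 0 ≤ K) (hk_w : k ≤ N * (3 * w * (2 * δ)))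
    (hk_K : k ≤ N * (K * μ * (2 * δ))) :
    √(k * (2 * π * (3 * δ))) + k * (4 / (N * δ * μ)) ≤ 3 * π * (1 + K) * (1 + N * δ ^ 2 * w) := by
  set x := N * δ ^ 2 * w
  have hx : 0 ≤ x := by positivity
  have hsqrt : √(k * (2 * π * (3 * δ))) ≤ 3 * π * (1 + x) := by
    have hk_x : k * (2 * π * (3 * δ)) ≤ 36 * π * x :=
      calc k * (2 * π * (3 * δ)) ≤ N * (3 * w * (2 * δ)) * (2 * π * (3 * δ)) := by gcongr
        _ = 36 * π * x := by ring
    rw [Real.sqrt_le_iff]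
    refine ⟨by positivity, hk_x.trans ?_⟩
    nlinarith [Real.pi_gt_three, mul_nonneg Real.pi_pos.le (sq_nonneg (1 - x)),
      mul_nonneg (by linarith [Real.pi_gt_three] : (0:ℝ) ≤ π - 1) (sq_nonneg (1 + x))]
  have hlin : k * (4 / (N * δ * μ)) ≤ 3 * π * K * (1 + x) :=
    calc k * (4 / (N * δ * μ)) ≤ N * (K * μ * (2 * δ)) * (4 / (N * δ * μ)) := by gcongr
      _ = 8 * K := by field_simp; ring
      _ ≤ 3 * π * K * (1 + x) := by
        nlinarith [mul_nonneg hK (by linarith [Real.pi_gt_three] : 0 ≤ 3 * π - 8),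
          mul_nonneg (by positivity : 0 ≤ 3 * π * K) hx]
  linarith

theorem sum_norm_integral_expPhase_near_zero_le {g : ℝ → ℝ} (hg : ContDiff ℝ 2 g)
    (hconv : ∀ t ∈ Icc 0 π, 0 ≤ deriv (deriv g) t) (hg0 : deriv (deriv g) 0 = 0)
    {c K w δ N : ℝ} {m : ℝ → ℝ} (hm_pos : ∀ t ∈ Ioo 0 (4 * c), 0 < m t)
    (hm_mono : MonotoneOn m (Ioo 0 (4 * c)))
    (hm : ∀ t ∈ Ioo 0 (4 * c), m t ≤ deriv (deriv g) t ∧ deriv (deriv g) t ≤ K * m t)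
    (hw : ∀ x ∈ Icc 0 π, ∀ y ∈ Icc 0 π, |x - y| < δ →
      |deriv (deriv g) x - deriv (deriv g) y| ≤ w)
    (hδ : 0 < δ) (hδc : δ < c) (h3δ : 3 * δ ≤ π) (hN : 0 < N) (S : Finset ℤ)
    (hS : ∀ ν ∈ S, N * deriv g 0 + 1 < ν ∧ (ν : ℝ) < N * deriv g (2 * δ)) :
    ∑ ν ∈ S, ‖∫ t in 0..π, expPhase N g ν t‖ ≤ 3 * π * (1 + K) * (1 + N * δ ^ 2 * w) := by
  have hd2 : Differentiable ℝ (deriv g) := (hg.deriv' (n := 1)).differentiable one_ne_zero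
  have h2δ : 2 * δ ∈ Ioo 0 (4 * c) := ⟨by linarith, by linarith⟩
  have hm₂ := hm_pos _ h2δ
  have hK : 1 ≤ K := le_of_mul_le_mul_right (by linarith [hm _ h2δ]) hm₂
  have h0 : (0 : ℝ) ∈ Icc 0 π := ⟨le_rfl, Real.pi_pos.le⟩
  have hw0 : 0 ≤ w := (abs_nonneg _).trans (hw 0 h0 0 h0 (by simpa using hδ))
  have hsub : ∀ t ∈ Icc 0 (2 * δ), t ∈ Icc 0 π := fun t ht => ⟨ht.1, by linarith [ht.2]⟩
  have hlow : ∀ t ∈ Icc (2 * δ) (3 * δ), m (2 * δ) ≤ deriv (deriv g) t := fun t ht => by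
    have ht' : t ∈ Ioo 0 (4 * c) := ⟨by linarith [ht.1], by linarith [ht.2]⟩
    exact (hm_mono h2δ ht' ht.1).trans (hm t ht').1
  have hupK : ∀ t ∈ Icc 0 (2 * δ), deriv (deriv g) t ≤ K * m (2 * δ) := fun t ht => by
    rcases ht.1.eq_or_lt with rfl | ht0
    · rw [hg0]; positivity
    · have ht' : t ∈ Ioo 0 (4 * c) := ⟨ht0, by linarith [ht.2]⟩
      exact (hm t ht').2.trans (by gcongr; exact hm_mono ht' h2δ ht.2)
  have hupw : ∀ t ∈ Icc 0 (2 * δ), deriv (deriv g) t ≤ 3 * w := fun t ht => by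
    have := abs_sub_le_three_mul_of_modulus (convex_Icc 0 π) hw (hsub t ht) h0
      (by rw [sub_zero, abs_of_nonneg ht.1]; linarith [ht.2])
    rw [hg0, sub_zero] at this
    exact (le_abs_self _).trans this
  have hcard : ∀ B : ℝ, (∀ t ∈ Icc 0 (2 * δ), deriv (deriv g) t ≤ B) →
      (S.card : ℝ) ≤ N * (B * (2 * δ)) := fun B hB => by
    simpa only [sub_zero] using card_le_of_deriv_le hd2 (by linarith) hN.le
      (fun t ht => hconv t (hsub t ht)) hB hS
  have hwindow : ∀ ν ∈ S, ‖∫ t in 0..π, expPhase N g ν t‖ ≤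
      ‖∫ t in 0..3 * δ, expPhase N g ν t‖ + 4 / (N * δ * m (2 * δ)) := fun ν hν =>
    norm_integral_expPhase_le_window_add hg hconv hδ h3δ hm₂ hlow hN (hS ν hν).2.le
  have hbessel := sum_sq_norm_integral_expPhase_le hg.continuous N (p := 0) (q := 3 * δ)
    (by linarith) (by linarith) S
  rw [sub_zero] at hbessel
  have hsum := Finset.sum_le_sqrt_card_mul_add S hwindow (fun _ _ => norm_nonneg _) hbessel
  exact hsum.trans (sqrt_mul_add_mul_div_le_of_le hN hδ hm₂ hw0 (by linarith) (hcard _ hupw)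
    (hcard _ hupK))

theorem sum_norm_integral_expPhase_near_pi_le {h : ℝ → ℝ} (hh : ContDiff ℝ 2 h)
    (hconv : ∀ t ∈ Icc 0 π, 0 ≤ deriv (deriv h) t) (hπ : deriv (deriv h) π = 0)
    {c K w δ N : ℝ} {m : ℝ → ℝ} (hm_pos : ∀ t ∈ Ioo 0 (4 * c), 0 < m t)
    (hm_mono : MonotoneOn m (Ioo 0 (4 * c)))
    (hm : ∀ t ∈ Ioo 0 (4 * c), m t ≤ deriv (deriv h) (π - t) ∧ deriv (deriv h) (π - t) ≤ K * m t)
    (hw : ∀ x ∈ Icc 0 π, ∀ y ∈ Icc 0 π, |x - y| < δ →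
      |deriv (deriv h) x - deriv (deriv h) y| ≤ w)
    (hδ : 0 < δ) (hδc : δ < c) (h3δ : 3 * δ ≤ π) (hN : 0 < N) (S : Finset ℤ)
    (hS : ∀ ν ∈ S, N * deriv h (π - 2 * δ) < ν ∧ (ν : ℝ) < N * deriv h π - 1) :
    ∑ ν ∈ S, ‖∫ t in 0..π, expPhase N h ν t‖ ≤ 3 * π * (1 + K) * (1 + N * δ ^ 2 * w) := by
  have hg' := deriv_comp_const_sub h π
  have hg'' := deriv_deriv_comp_const_sub h π
  have hrefl : ∀ s ∈ Icc 0 π, π - s ∈ Icc 0 π := fun s hs =>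
    ⟨by linarith [hs.2], by linarith [hs.1]⟩
  have key := sum_norm_integral_expPhase_near_zero_le (g := fun s => h (π - s))
    (hh.comp (by fun_prop)) (fun s hs => hg'' s ▸ hconv _ (hrefl s hs)) (by rw [hg'', sub_zero, hπ])
    hm_pos hm_mono (fun t ht => hg'' t ▸ hm t ht)
    (fun x hx y hy hxy => by
      rw [hg'', hg'']
      exact hw _ (hrefl x hx) _ (hrefl y hy) (by rwa [sub_sub_sub_cancel_left, abs_sub_comm]))
    hδ hδc h3δ hN (S.map (Equiv.neg ℤ).toEmbedding) (by
      simp only [Finset.mem_map, Equiv.toEmbedding_apply, Equiv.neg_apply, forall_exists_index,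
        and_imp, forall_apply_eq_imp_iff₂, hg', sub_zero]
      intro ν hν
      push_cast
      constructor <;> linarith [hS ν hν])
  rw [Finset.sum_map] at key
  simp only [norm_integral_expPhase_comp_sub N h _ π]
  exact key

theorem sum_norm_fourierCoeff_le_of_le {h : ℝ → ℝ} (hh : Continuous h)
    (hodd : ∀ t, h (-t) = -h t) (n : ℕ) (S : Finset ℤ) {B : ℝ}
    (hB : ∑ ν ∈ S, ‖∫ t in 0..π, expPhase n h ν t‖ ≤ π * B) :
    ∑ ν ∈ S, ‖(1 / (2 * π)) * ∫ t in (-π)..π,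
        Complex.exp (Complex.I * ((n : ℂ) * (h t : ℂ) - (ν : ℂ) * (t : ℂ)))‖ ≤ B := by
  have h2π : ‖(1 / (2 * π) : ℂ)‖ = 1 / (2 * π) := by
    rw [show (1 / (2 * π) : ℂ) = ((1 / (2 * π) : ℝ) : ℂ) by push_cast; rfl, norm_real,
      Real.norm_of_nonneg (by positivity)]
  have hterm : ∀ ν : ℤ, ‖(1 / (2 * π)) * ∫ t in (-π)..π,
      Complex.exp (Complex.I * ((n : ℂ) * (h t : ℂ) - (ν : ℂ) * (t : ℂ)))‖ ≤
        π⁻¹ * ‖∫ t in 0..π, expPhase n h ν t‖ := fun ν => by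
    have hsymm := norm_integral_expPhase_symm_le hh hodd n ν π
    simp only [expPhase, ofReal_natCast] at hsymm ⊢
    rw [norm_mul, h2π]
    calc 1 / (2 * π) * _ ≤ 1 / (2 * π) * (2 * _) := by gcongr
      _ = _ := by field_simp
  calc _ ≤ π⁻¹ * ∑ ν ∈ S, ‖∫ t in 0..π, expPhase n h ν t‖ := by
        rw [Finset.mul_sum]; exact Finset.sum_le_sum fun ν _ => hterm ν
    _ ≤ π⁻¹ * (π * B) := by gcongr
    _ = B := by field_simp

end Oscillatory

/-- Periphery terms estimate: the sum of `|a_{n,ν}|` over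
`n h'(0) + 1 < ν < n h'(2δ)` (and symmetrically over
`n h'(π-2δ) < ν < n h'(π) - 1`) is at most `C'(1 + n δ² ω(δ))`. -/
theorem periphery_terms_sum_le
    (h : ℝ → ℝ) (hreg : ContDiff ℝ 2 h)
    (hper : ∃ k : ℤ, ∀ t : ℝ, h (t + 2 * π) = h t + 2 * (k : ℝ) * π)
    (hodd : ∀ t : ℝ, h (-t) = -h t)
    (hpos : ∀ t ∈ Set.Ioo (0 : ℝ) π, 0 < deriv (deriv h) t)
    (c C : ℝ) (hc : 0 < c) (hcπ : c < π / 8)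
    (hM : ConditionMWith (deriv (deriv h)) c C)
    (ω : ℝ → ℝ)
    (hω : ∀ δ : ℝ, ω δ = sSup {v : ℝ | ∃ x ∈ Set.Icc (0 : ℝ) π,
      ∃ y ∈ Set.Icc (0 : ℝ) π, |x - y| < δ ∧
        v = |deriv (deriv h) x - deriv (deriv h) y|}) :
    ∃ C' > (0 : ℝ), ∀ n : ℕ, 0 < n → ∀ δ : ℝ, 0 < δ → δ < c →
      (∑ ν ∈ (Finset.Icc ⌈(n : ℝ) * deriv h 0⌉ ⌊(n : ℝ) * deriv h (2 * δ)⌋).filter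
          (fun ν : ℤ => (n : ℝ) * deriv h 0 + 1 < (ν : ℝ) ∧
            (ν : ℝ) < (n : ℝ) * deriv h (2 * δ)),
        ‖((1 / (2 * π)) * ∫ t in (-π)..π,
          Complex.exp (Complex.I * ((n : ℂ) * (h t : ℂ) - (ν : ℂ) * (t : ℂ))))‖)
        ≤ C' * (1 + n * δ ^ 2 * ω δ) ∧
      (∑ ν ∈ (Finset.Icc ⌈(n : ℝ) * deriv h (π - 2 * δ)⌉
            ⌊(n : ℝ) * deriv h π⌋).filter
          (fun ν : ℤ => (n : ℝ) * deriv h (π - 2 * δ) < (ν : ℝ) ∧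
            (ν : ℝ) < (n : ℝ) * deriv h π - 1),
        ‖((1 / (2 * π)) * ∫ t in (-π)..π,
          Complex.exp (Complex.I * ((n : ℂ) * (h t : ℂ) - (ν : ℂ) * (t : ℂ))))‖)
        ≤ C' * (1 + n * δ ^ 2 * ω δ) := by
  obtain ⟨k, hk⟩ := hper
  obtain ⟨m₀, mπ, hm_pos, hm₀_mono, hmπ_mono, -, hm⟩ := hM
  have hconv := deriv_deriv_nonneg_of_odd_of_add_const hodd hk hpos
  have hw : ∀ δ, ∀ x ∈ Icc 0 π, ∀ y ∈ Icc 0 π, |x - y| < δ →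
      |deriv (deriv h) x - deriv (deriv h) y| ≤ ω δ := fun δ x hx y hy hxy =>
    hω δ ▸ abs_sub_le_sSup_modulus
      ((hreg.deriv' (n := 1)).continuous_deriv le_rfl).continuousOn δ hx hy hxy
  have hC : 1 ≤ C := by
    have hc4 : c ∈ Ioo 0 (4 * c) := ⟨hc, by linarith⟩
    exact le_of_mul_le_mul_right (by linarith [hm c hc4]) (hm_pos c hc4).1
  refine ⟨3 * (1 + C), by positivity, fun n hn δ hδ hδc => ⟨?_, ?_⟩⟩
  · refine sum_norm_fourierCoeff_le_of_le hreg.continuous hodd n _ ?_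
    refine (sum_norm_integral_expPhase_near_zero_le hreg hconv
      (deriv_deriv_zero_of_odd hodd)
      (fun t ht => (hm_pos t ht).1) hm₀_mono (fun t ht => ⟨(hm t ht).1, (hm t ht).2.1⟩)
      (hw δ) hδ hδc (by linarith) (by positivity) _
      fun ν hν => (Finset.mem_filter.mp hν).2).trans_eq (by ring)
  · refine sum_norm_fourierCoeff_le_of_le hreg.continuous hodd n _ ?_
    refine (sum_norm_integral_expPhase_near_pi_le hreg hconv
      (deriv_deriv_eq_zero_of_odd_of_add_const hodd hk)
      (fun t ht => (hm_pos t ht).2) hmπ_mono (fun t ht => ⟨(hm t ht).2.2.1, (hm t ht).2.2.2⟩)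
      (hw δ) hδ hδc (by linarith) (by positivity) _
      fun ν hν => (Finset.mem_filter.mp hν).2).trans_eq (by ring)
end
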